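/- arXiv:2508.13810 — 8 statements merged into one kernel-verified Lean document; each statement's English description precedes it below -/
import Mathlib

section
/- If f, g, h are real-rooted polynomials with nonnegative real coefficients such that h interlaces f and h interlaces g, then h interlaces f + g. -/
/-!
Interlacing is read off the root-counting functions `N_p(x) = #{roots of p in [x, ∞)}`:
`h ⪯ f` exactly when `N_h ≤ N_f ≤ N_h + 1`. Common roots of `f`, `g`, `h` are divided out one at
a time. Once there are none, every root `β` of `h` is simple, and each of `f`, `g` either vanishes
at `β` or has the sign `(-1)^(N_h β)` there, and not both vanish; so `f + g` has that sign.
Together with one point above and one below all roots of `h`, these sample points give, by the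
intermediate value theorem, a root of `f + g` between any two consecutive ones, which accounts for
all of its roots and places them as interlacing requires.
-/

/-- The list of real roots of `f` (with multiplicity), in decreasing order. -/
noncomputable def rootsDesc (f : Polynomial ℝ) : List ℝ :=
  (f.roots.sort (· ≤ ·)).reverse

/-- A real polynomial is real-rooted if it has as many real roots
(counted with multiplicity) as its degree. -/
def RealRooted (f : Polynomial ℝ) : Prop :=
  Multiset.card f.roots = f.natDegree

/-- `g` interlaces `f` (written `g ⪯ f`): both are real-rooted with positive leading
coefficients, the degrees differ by at most one, and with roots listed in decreasing
order `⋯ ≤ β₂ ≤ α₂ ≤ β₁ ≤ α₁`. -/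
def Interlaces (g f : Polynomial ℝ) : Prop :=
  RealRooted f ∧ RealRooted g ∧ 0 < f.leadingCoeff ∧ 0 < g.leadingCoeff ∧
  (f.natDegree = g.natDegree ∨ f.natDegree = g.natDegree + 1) ∧
  (∀ (i : ℕ) (hg : i < (rootsDesc g).length) (hf : i < (rootsDesc f).length),
    (rootsDesc g).get ⟨i, hg⟩ ≤ (rootsDesc f).get ⟨i, hf⟩) ∧
  (∀ (i : ℕ) (hf : i + 1 < (rootsDesc f).length) (hg : i < (rootsDesc g).length),
    (rootsDesc f).get ⟨i + 1, hf⟩ ≤ (rootsDesc g).get ⟨i, hg⟩)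

open Polynomial Filter Topology

theorem List.Pairwise.le_getElem_iff_lt_countP {α : Type*} [LinearOrder α] {l : List α}
    (hl : l.Pairwise (· ≥ ·)) (x : α) {i : ℕ} (hi : i < l.length) :
    x ≤ l[i] ↔ i < l.countP (x ≤ ·) := by
  induction l generalizing i with
  | nil => simp at hi
  | cons a t ih =>
    rw [List.pairwise_cons] at hl
    by_cases hxa : x ≤ a
    · cases i with
      | zero => simp [hxa]
      | succ i => simpa [List.countP_cons, hxa] using ih hl.2 (by simpa using hi)
    · have hlt : ∀ b ∈ a :: t, ¬ x ≤ b := by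
        simp only [List.mem_cons, forall_eq_or_imp]
        exact ⟨hxa, fun b hb hxb => hxa (hxb.trans (hl.1 b hb))⟩
      have hzero : (a :: t).countP (x ≤ ·) = 0 := List.countP_eq_zero.2 (by simpa using hlt)
      simp [hzero, hlt _ (List.getElem_mem hi)]

theorem List.Pairwise.cons_append_singleton {α : Type*} {R : α → α → Prop} {l : List α}
    {a b : α} (hl : l.Pairwise R) (hb : ∀ x ∈ l, R b x) (ha : ∀ x ∈ l, R x a) (hba : R b a) :
    (b :: (l ++ [a])).Pairwise R := by
  simp only [List.pairwise_cons, List.pairwise_append, List.mem_append, List.mem_singleton]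
  refine ⟨fun x hx => ?_, hl, by simp, fun x hx y hy => hy ▸ ha x hx⟩
  rcases hx with hx | rfl
  exacts [hb x hx, hba]

theorem Multiset.countP_mono_left {α : Type*} {p q : α → Prop} [DecidablePred p]
    [DecidablePred q] {s : Multiset α} (h : ∀ x ∈ s, p x → q x) :
    s.countP p ≤ s.countP q := by
  induction s using Quot.inductionOn
  simpa using List.countP_mono_left (by simpa using h)

theorem Multiset.countP_lt_countP {α : Type*} {p q : α → Prop} [DecidablePred p]
    [DecidablePred q] {s : Multiset α} (h : ∀ x ∈ s, p x → q x) {y : α} (hy : y ∈ s)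
    (hqy : q y) (hpy : ¬ p y) : s.countP p < s.countP q := by
  obtain ⟨t, rfl⟩ := Multiset.exists_cons_of_mem hy
  rw [Multiset.countP_cons_of_neg _ hpy, Multiset.countP_cons_of_pos _ hqy]
  exact Nat.lt_succ_of_le (Multiset.countP_mono_left fun x hx => h x (Multiset.mem_cons_of_mem hx))

theorem Multiset.neg_one_pow_countP_neg_mul_prod_pos (s : Multiset ℝ) (hs : 0 ∉ s) :
    0 < (-1) ^ s.countP (· < 0) * s.prod := by
  induction s using Multiset.induction_on with
  | empty => simp
  | cons a t ih =>
    have ht := ih fun h0 => hs (Multiset.mem_cons_of_mem h0)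
    have ha : a ≠ 0 := fun h0 => hs (h0 ▸ Multiset.mem_cons_self a t)
    rw [Multiset.countP_cons, Multiset.prod_cons]
    rcases ha.lt_or_gt with ha | ha
    · rw [if_pos ha, pow_succ]; nlinarith
    · rw [if_neg ha.not_gt, add_zero]; nlinarith

noncomputable def numRootsGE (p : ℝ[X]) (x : ℝ) : ℕ := p.roots.countP (x ≤ ·)

noncomputable def numRootsGT (p : ℝ[X]) (x : ℝ) : ℕ := p.roots.countP (x < ·)

theorem numRootsGE_eq_numRootsGT_add_count (p : ℝ[X]) (x : ℝ) :
    numRootsGE p x = numRootsGT p x + p.roots.count x := by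
  simp only [numRootsGE, numRootsGT]
  induction p.roots using Multiset.induction_on with
  | empty => simp
  | cons a s ih =>
    rw [Multiset.countP_cons, Multiset.countP_cons, Multiset.count_cons, ih]
    rcases lt_trichotomy x a with hxa | rfl | hxa
    · simp [hxa.le, hxa, hxa.ne]; omega
    · simp; omega
    · simp [hxa.not_ge, hxa.not_gt, hxa.ne']

theorem numRootsGE_le_card (p : ℝ[X]) (x : ℝ) : numRootsGE p x ≤ Multiset.card p.roots :=
  Multiset.countP_le_card _ _

theorem eventually_atBot_numRootsGE (p : ℝ[X]) :
    ∀ᶠ x in atBot, numRootsGE p x = Multiset.card p.roots := by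
  filter_upwards [(eventually_all_finite p.roots.finite_toSet).2 fun r _ => eventually_le_atBot r]
    with x hx
  exact Multiset.countP_eq_card.2 hx

theorem eventually_nhdsGT_numRootsGE (p : ℝ[X]) (y : ℝ) :
    ∀ᶠ x in 𝓝[>] y, numRootsGE p x = numRootsGT p y := by
  have hroot (r : ℝ) : ∀ᶠ x in 𝓝[>] y, (x ≤ r ↔ y < r) := by
    by_cases hr : y < r
    · filter_upwards [Ioo_mem_nhdsGT hr] with x hx using iff_of_true hx.2.le hr
    · filter_upwards [self_mem_nhdsWithin] with x (hx : y < x)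
      exact iff_of_false (by linarith) hr
  filter_upwards [(eventually_all_finite p.roots.finite_toSet).2 fun r _ => hroot r] with x hx
  exact Multiset.countP_congr rfl fun r hr => propext (hx r hr)

theorem coe_rootsDesc (p : ℝ[X]) : (rootsDesc p : Multiset ℝ) = p.roots := by
  rw [rootsDesc, Multiset.coe_reverse, Multiset.sort_eq]

theorem length_rootsDesc (p : ℝ[X]) : (rootsDesc p).length = Multiset.card p.roots := by
  rw [← Multiset.coe_card, coe_rootsDesc]

theorem pairwise_rootsDesc (p : ℝ[X]) : (rootsDesc p).Pairwise (· ≥ ·) :=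
  List.pairwise_reverse.2 (Multiset.pairwise_sort _ _)

theorem le_rootsDesc_getElem_iff (p : ℝ[X]) (x : ℝ) {i : ℕ} (hi : i < (rootsDesc p).length) :
    x ≤ (rootsDesc p)[i] ↔ i < numRootsGE p x := by
  rw [(pairwise_rootsDesc p).le_getElem_iff_lt_countP x hi, numRootsGE, ← coe_rootsDesc,
    Multiset.coe_countP]

theorem pairwise_gt_rootsDesc {p : ℝ[X]} (hp : p.roots.Nodup) :
    (rootsDesc p).Pairwise (· > ·) := by
  have hnodup : (rootsDesc p).Nodup := by rwa [← Multiset.coe_nodup, coe_rootsDesc]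
  exact ((pairwise_rootsDesc p).and hnodup).imp fun hr => lt_of_le_of_ne hr.1 hr.2.symm

theorem numRootsGE_rootsDesc_getElem {p : ℝ[X]} (hp : p.roots.Nodup) {i : ℕ}
    (hi : i < (rootsDesc p).length) : numRootsGE p (rootsDesc p)[i] = i + 1 := by
  have hlow := (le_rootsDesc_getElem_iff p _ hi).1 le_rfl
  by_contra hne
  have hi' : i + 1 < (rootsDesc p).length := by
    have := numRootsGE_le_card p (rootsDesc p)[i]
    rw [← length_rootsDesc] at this
    omega
  have hle := (le_rootsDesc_getElem_iff p (rootsDesc p)[i] hi').2 (by omega)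
  exact (List.pairwise_iff_getElem.1 (pairwise_gt_rootsDesc hp) i (i + 1) hi hi'
    (by omega)).not_ge hle

def CountInterlaces (h f : ℝ[X]) : Prop :=
  ∀ x, numRootsGE h x ≤ numRootsGE f x ∧ numRootsGE f x ≤ numRootsGE h x + 1

theorem CountInterlaces.card_roots {h f : ℝ[X]} (hfh : CountInterlaces h f) :
    Multiset.card h.roots ≤ Multiset.card f.roots ∧
      Multiset.card f.roots ≤ Multiset.card h.roots + 1 := by
  obtain ⟨x, hxh, hxf⟩ :=
    ((eventually_atBot_numRootsGE h).and (eventually_atBot_numRootsGE f)).exists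
  rw [← hxh, ← hxf]
  exact hfh x

theorem countInterlaces_iff_rootsDesc {h f : ℝ[X]}
    (hcard : Multiset.card h.roots ≤ Multiset.card f.roots ∧
      Multiset.card f.roots ≤ Multiset.card h.roots + 1) :
    CountInterlaces h f ↔
      (∀ (i : ℕ) (hh : i < (rootsDesc h).length) (hf : i < (rootsDesc f).length),
        (rootsDesc h).get ⟨i, hh⟩ ≤ (rootsDesc f).get ⟨i, hf⟩) ∧
      (∀ (i : ℕ) (hf : i + 1 < (rootsDesc f).length) (hh : i < (rootsDesc h).length),
        (rootsDesc f).get ⟨i + 1, hf⟩ ≤ (rootsDesc h).get ⟨i, hh⟩) := by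
  simp only [List.get_eq_getElem]
  have hlen_h := length_rootsDesc h
  have hlen_f := length_rootsDesc f
  constructor
  · intro hfh
    refine ⟨fun i hh hf => ?_, fun i hf hh => ?_⟩
    · have := (le_rootsDesc_getElem_iff h _ hh).1 le_rfl
      exact (le_rootsDesc_getElem_iff f _ hf).2 (this.trans_le (hfh _).1)
    · have := (le_rootsDesc_getElem_iff f _ hf).1 le_rfl
      exact (le_rootsDesc_getElem_iff h _ hh).2 (by linarith [(hfh (rootsDesc f)[i + 1]).2])
  · rintro ⟨hhf, hfh⟩ x
    have hNh := numRootsGE_le_card h x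
    have hNf := numRootsGE_le_card f x
    constructor
    · by_contra! hlt
      have hh : numRootsGE h x - 1 < (rootsDesc h).length := by omega
      have hf : numRootsGE h x - 1 < (rootsDesc f).length := by omega
      have := (le_rootsDesc_getElem_iff h x hh).2 (by omega)
      have := (le_rootsDesc_getElem_iff f x hf).1 (this.trans (hhf _ hh hf))
      omega
    · by_contra! hlt
      have hf : numRootsGE h x + 1 < (rootsDesc f).length := by omega
      have hh : numRootsGE h x < (rootsDesc h).length := by omega
      have := (le_rootsDesc_getElem_iff f x hf).2 hlt
      have := (le_rootsDesc_getElem_iff h x hh).1 (this.trans (hfh _ hf hh))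
      omega

theorem interlaces_iff {h f : ℝ[X]} :
    Interlaces h f ↔ RealRooted f ∧ RealRooted h ∧ 0 < f.leadingCoeff ∧
      0 < h.leadingCoeff ∧ CountInterlaces h f := by
  constructor
  · rintro ⟨hf, hh, hlf, hlh, hdeg, hidx⟩
    have hcard : Multiset.card h.roots ≤ Multiset.card f.roots ∧
        Multiset.card f.roots ≤ Multiset.card h.roots + 1 := by
      rw [hf, hh]; omega
    exact ⟨hf, hh, hlf, hlh, (countInterlaces_iff_rootsDesc hcard).2 hidx⟩
  · rintro ⟨hf, hh, hlf, hlh, hfh⟩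
    have hcard := hfh.card_roots
    rw [hf, hh] at hcard
    exact ⟨hf, hh, hlf, hlh, by omega, (countInterlaces_iff_rootsDesc hfh.card_roots).1 hfh⟩

theorem RealRooted.neg_one_pow_numRootsGT_mul_eval_pos {p : ℝ[X]} (hp : RealRooted p)
    (hlc : 0 < p.leadingCoeff) {x : ℝ} (hx : ¬ p.IsRoot x) :
    0 < (-1) ^ numRootsGT p x * p.eval x := by
  have hsign := (p.roots.map (x - ·)).neg_one_pow_countP_neg_mul_prod_pos (by
    simp only [Multiset.mem_map, sub_eq_zero, not_exists, not_and]
    exact fun r hr hxr => hx (hxr ▸ isRoot_of_mem_roots hr))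
  have hcount : (p.roots.map (x - ·)).countP (· < 0) = numRootsGT p x := by
    rw [Multiset.countP_map, numRootsGT, Multiset.countP_eq_card_filter]
    simp only [sub_neg]
  rw [(splits_iff_card_roots.2 hp).eval_eq_prod_roots, mul_left_comm, ← hcount]
  exact mul_pos hlc hsign

theorem CountInterlaces.numRootsGT_le {h f : ℝ[X]} (hfh : CountInterlaces h f) (y : ℝ) :
    numRootsGT f y ≤ numRootsGT h y + 1 := by
  obtain ⟨x, hxh, hxf⟩ :=
    ((eventually_nhdsGT_numRootsGE h y).and (eventually_nhdsGT_numRootsGE f y)).exists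
  rw [← hxh, ← hxf]
  exact (hfh x).2

theorem CountInterlaces.numRootsGE_le_numRootsGT {h f : ℝ[X]} (hfh : CountInterlaces h f)
    {β : ℝ} (hβ : ¬ f.IsRoot β) : numRootsGE h β ≤ numRootsGT f β := by
  have hcount : f.roots.count β = 0 :=
    Multiset.count_eq_zero.2 fun hmem => hβ (isRoot_of_mem_roots hmem)
  have := numRootsGE_eq_numRootsGT_add_count f β
  linarith [(hfh β).1]

theorem CountInterlaces.count_roots_le_one {h f : ℝ[X]} (hfh : CountInterlaces h f)
    {β : ℝ} (hβ : ¬ f.IsRoot β) : h.roots.count β ≤ 1 := by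
  have := numRootsGE_eq_numRootsGT_add_count h β
  have := hfh.numRootsGE_le_numRootsGT hβ
  have := hfh.numRootsGT_le β
  omega

theorem CountInterlaces.neg_one_pow_mul_eval_pos {h f : ℝ[X]} (hf : RealRooted f)
    (hlf : 0 < f.leadingCoeff) (hfh : CountInterlaces h f) {β : ℝ} (hβ : β ∈ h.roots)
    (hfβ : ¬ f.IsRoot β) : 0 < (-1) ^ numRootsGE h β * f.eval β := by
  -- squeeze: `N_h β ≤ N_f β = P_f β ≤ P_h β + 1 ≤ N_h β`, where `N`, `P` count roots `≥ β`, `> β`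
  have hGT : numRootsGT f β = numRootsGE h β := by
    have := numRootsGE_eq_numRootsGT_add_count h β
    have := Multiset.count_pos.2 hβ
    have := hfh.numRootsGE_le_numRootsGT hfβ
    have := hfh.numRootsGT_le β
    omega
  rw [← hGT]
  exact hf.neg_one_pow_numRootsGT_mul_eval_pos hlf hfβ

theorem numRootsGT_lt_of_eval_mul_neg {p : ℝ[X]} (hp : p ≠ 0) {a b : ℝ} (hab : a < b)
    (hsign : p.eval a * p.eval b < 0) : numRootsGT p b < numRootsGT p a := by
  have hzero : (0 : ℝ) ∈ Set.uIcc (p.eval a) (p.eval b) := by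
    rw [Set.mem_uIcc]
    rcases mul_neg_iff.1 hsign with h | h
    · exact Or.inr ⟨h.2.le, h.1.le⟩
    · exact Or.inl ⟨h.1.le, h.2.le⟩
  obtain ⟨r, hr, hr0⟩ := intermediate_value_uIcc p.continuous.continuousOn hzero
  rw [Set.uIcc_of_le hab.le] at hr
  have hra : r ≠ a := by rintro rfl; simp [hr0] at hsign
  exact Multiset.countP_lt_countP (fun x _ hx => hab.trans hx)
    ((mem_roots hp).2 hr0) (lt_of_le_of_ne hr.1 hra.symm) (not_lt.2 hr.2)

theorem numRootsGT_add_le_of_sign_changes {p : ℝ[X]} (hp : p ≠ 0) (t : ℕ → ℝ) (n : ℕ)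
    (ht : ∀ k < n, t (k + 1) < t k ∧ p.eval (t k) * p.eval (t (k + 1)) < 0) :
    numRootsGT p (t 0) + n ≤ numRootsGT p (t n) := by
  induction n with
  | zero => rfl
  | succ n ih =>
    have hstep := numRootsGT_lt_of_eval_mul_neg hp (ht n (by omega)).1 (by
      rw [mul_comm]; exact (ht n (by omega)).2)
    have := ih fun k hk => ht k (by omega)
    omega

theorem leadingCoeff_add_pos {f g : ℝ[X]} (hf : 0 < f.leadingCoeff)
    (hg : 0 < g.leadingCoeff) : 0 < (f + g).leadingCoeff := by
  rcases lt_trichotomy f.degree g.degree with hlt | heq | hgt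
  · rwa [leadingCoeff_add_of_degree_lt hlt]
  · rw [leadingCoeff_add_of_degree_eq heq (by positivity)]
    positivity
  · rwa [leadingCoeff_add_of_degree_lt' hgt]

theorem natDegree_add_of_leadingCoeff_pos {f g : ℝ[X]} (hf : 0 < f.leadingCoeff)
    (hg : 0 < g.leadingCoeff) : (f + g).natDegree = max f.natDegree g.natDegree := by
  have hdeg := degree_add_eq_of_leadingCoeff_add_ne_zero (p := f) (q := g) (by positivity)
  rw [degree_eq_natDegree (leadingCoeff_ne_zero.1 hf.ne'),
    degree_eq_natDegree (leadingCoeff_ne_zero.1 hg.ne')] at hdeg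
  refine natDegree_eq_of_degree_eq_some (hdeg.trans ?_)
  rcases le_total f.natDegree g.natDegree with hle | hle <;> simp [hle]

theorem eventually_atTop_eval_pos {p : ℝ[X]} (hlc : 0 < p.leadingCoeff) :
    ∀ᶠ x in atTop, 0 < p.eval x := by
  by_cases hdeg : p.natDegree = 0
  · rw [leadingCoeff, hdeg] at hlc
    rw [eq_C_of_natDegree_eq_zero hdeg]
    exact Eventually.of_forall fun x => by simpa using hlc
  · exact (tendsto_atTop_of_leadingCoeff_nonneg p
      (natDegree_pos_iff_degree_pos.1 (Nat.pos_of_ne_zero hdeg)) hlc.le).eventually_gt_atTop 0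

theorem eventually_atBot_neg_one_pow_mul_eval_pos {p : ℝ[X]} (hlc : 0 < p.leadingCoeff) :
    ∀ᶠ x in atBot, 0 < (-1) ^ p.natDegree * p.eval x := by
  set q := C ((-1) ^ p.natDegree) * p.comp (-X)
  have hq : q.leadingCoeff = p.leadingCoeff := by
    simp [q, comp_neg_X_leadingCoeff_eq, ← mul_assoc, ← mul_pow]
  filter_upwards [tendsto_neg_atBot_atTop.eventually (eventually_atTop_eval_pos (hq ▸ hlc))]
    with x hx
  simpa [q] using hx

theorem realRooted_and_countInterlaces_of_sign_changes {h F : ℝ[X]} (hF : F ≠ 0)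
    (t : ℕ → ℝ) (ht : ∀ i (hi : i < (rootsDesc h).length), t (i + 1) = (rootsDesc h)[i])
    (hdeg : Multiset.card h.roots ≤ F.natDegree ∧ F.natDegree ≤ Multiset.card h.roots + 1)
    (hchain : ∀ k < F.natDegree, t (k + 1) < t k ∧ F.eval (t k) * F.eval (t (k + 1)) < 0) :
    RealRooted F ∧ CountInterlaces h F := by
  have hlen := length_rootsDesc h
  have hGT_le_card (y : ℝ) : numRootsGT F y ≤ Multiset.card F.roots :=
    Multiset.countP_le_card _ _
  have hcard : Multiset.card F.roots = F.natDegree := by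
    have := numRootsGT_add_le_of_sign_changes hF t _ hchain
    linarith [card_roots' F, hGT_le_card (t F.natDegree)]
  refine ⟨hcard, fun x => ⟨?_, ?_⟩⟩
  · set k := numRootsGE h x
    have hk := numRootsGE_le_card h x
    obtain hk0 | hk0 := Nat.eq_zero_or_pos k
    · omega
    have hi : k - 1 < (rootsDesc h).length := by omega
    have hxt : x ≤ t k := by
      rw [show k = k - 1 + 1 by omega, ht _ hi]
      exact (le_rootsDesc_getElem_iff h x hi).2 (by omega)
    have hcount := numRootsGT_add_le_of_sign_changes hF t k fun j hj => hchain j (by omega)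
    have hmono : numRootsGT F (t k) ≤ numRootsGE F x :=
      Multiset.countP_mono_left fun r _ hr => hxt.trans hr.le
    omega
  · set k := numRootsGE h x
    by_cases hk : k < (rootsDesc h).length
    · have htx : t (k + 1) < x := by
        rw [ht k hk]
        by_contra! hle
        exact lt_irrefl k ((le_rootsDesc_getElem_iff h x hk).1 hle)
      have hcount := numRootsGT_add_le_of_sign_changes hF (fun j => t (k + 1 + j))
        (F.natDegree - (k + 1)) fun j hj => hchain (k + 1 + j) (by omega)
      rw [add_zero] at hcount
      have hmono : numRootsGE F x ≤ numRootsGT F (t (k + 1)) :=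
        Multiset.countP_mono_left fun r _ hr => htx.trans_le hr
      have := hGT_le_card (t (k + 1 + (F.natDegree - (k + 1))))
      omega
    · have := numRootsGE_le_card F x
      omega

theorem mul_neg_of_neg_one_pow_mul_pos {u v : ℝ} (k : ℕ) (hu : 0 < (-1) ^ k * u)
    (hv : 0 < (-1) ^ (k + 1) * v) : u * v < 0 := by
  have hsq : ((-1 : ℝ) ^ k) ^ 2 = 1 := by rw [← pow_mul, mul_comm, pow_mul]; norm_num
  have := mul_pos hu hv
  rw [pow_succ] at this
  nlinarith

theorem realRooted_and_countInterlaces_of_sign_at_roots {h F : ℝ[X]}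
    (hF : 0 < F.leadingCoeff) (hnodup : h.roots.Nodup)
    (hdeg : Multiset.card h.roots ≤ F.natDegree ∧ F.natDegree ≤ Multiset.card h.roots + 1)
    (hsign : ∀ β ∈ h.roots, 0 < (-1) ^ numRootsGE h β * F.eval β) :
    RealRooted F ∧ CountInterlaces h F := by
  set L := rootsDesc h
  have hmem : ∀ r ∈ L, r ∈ h.roots := fun r hr => by rwa [← coe_rootsDesc, Multiset.mem_coe]
  obtain ⟨b, hbh, hb⟩ := ((eventually_all_finite h.roots.finite_toSet).2
    (fun r _ => eventually_gt_atTop r) |>.and (eventually_atTop_eval_pos hF)).exists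
  obtain ⟨a, hah, hab, ha⟩ := ((eventually_all_finite h.roots.finite_toSet).2
    (fun r _ => eventually_lt_atBot r) |>.and ((eventually_lt_atBot b).and
      (eventually_atBot_neg_one_pow_mul_eval_pos hF))).exists
  set M := b :: (L ++ [a])
  have hM : M.Pairwise (· > ·) := (pairwise_gt_rootsDesc hnodup).cons_append_singleton
    (fun r hr => hbh r (hmem r hr)) (fun r hr => hah r (hmem r hr)) hab
  have hlen : M.length = Multiset.card h.roots + 2 := by simp [M, L, length_rootsDesc]
  have ht : ∀ i (hi : i < L.length), M.getD (i + 1) 0 = L[i] := fun i hi => by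
    rw [List.getD_cons_succ, List.getD_append _ _ _ _ hi, List.getD_eq_getElem _ _ hi]
  have hsignM : ∀ k ≤ F.natDegree, 0 < (-1) ^ k * F.eval (M.getD k 0) := by
    rintro (_ | i) hi
    · simpa [M] using hb
    by_cases hiL : i < L.length
    · rw [ht i hiL, ← numRootsGE_rootsDesc_getElem hnodup hiL]
      exact hsign _ (hmem _ (List.getElem_mem hiL))
    · have hiL' : i = L.length := by rw [length_rootsDesc] at hiL ⊢; omega
      have hMa : M.getD (i + 1) 0 = a := by
        rw [List.getD_cons_succ, List.getD_append_right _ _ _ _ hiL'.ge, hiL', Nat.sub_self]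
        rfl
      rw [hMa, show i + 1 = F.natDegree by rw [length_rootsDesc] at hiL'; omega]
      exact ha
  refine realRooted_and_countInterlaces_of_sign_changes (leadingCoeff_ne_zero.1 hF.ne')
    (M.getD · 0) ht hdeg fun k hk => ⟨?_, mul_neg_of_neg_one_pow_mul_pos k
      (hsignM k hk.le) (hsignM (k + 1) hk)⟩
  rw [List.getD_eq_getElem _ _ (by omega), List.getD_eq_getElem _ _ (by omega)]
  exact List.pairwise_iff_getElem.1 hM k (k + 1) (by omega) (by omega) (by omega)

theorem CountInterlaces.nodup_roots {f g h : ℝ[X]} (hfh : CountInterlaces h f)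
    (hgh : CountInterlaces h g) (hnc : ∀ β ∈ h.roots, ¬ (f.IsRoot β ∧ g.IsRoot β)) :
    h.roots.Nodup := by
  refine Multiset.nodup_iff_count_le_one.2 fun β => ?_
  by_cases hβ : β ∈ h.roots
  · rcases not_and_or.1 (hnc β hβ) with hfβ | hgβ
    exacts [hfh.count_roots_le_one hfβ, hgh.count_roots_le_one hgβ]
  · rw [Multiset.count_eq_zero.2 hβ]
    exact zero_le_one

theorem CountInterlaces.neg_one_pow_mul_eval_nonneg {h f : ℝ[X]} (hf : RealRooted f)
    (hlf : 0 < f.leadingCoeff) (hfh : CountInterlaces h f) {β : ℝ} (hβ : β ∈ h.roots) :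
    0 ≤ (-1) ^ numRootsGE h β * f.eval β := by
  by_cases hfβ : f.IsRoot β
  · simp [hfβ.eq_zero]
  · exact (hfh.neg_one_pow_mul_eval_pos hf hlf hβ hfβ).le

theorem CountInterlaces.add_of_not_isRoot {f g h : ℝ[X]} (hf : RealRooted f)
    (hg : RealRooted g) (hlf : 0 < f.leadingCoeff) (hlg : 0 < g.leadingCoeff)
    (hfh : CountInterlaces h f) (hgh : CountInterlaces h g)
    (hnc : ∀ β ∈ h.roots, ¬ (f.IsRoot β ∧ g.IsRoot β)) :
    RealRooted (f + g) ∧ CountInterlaces h (f + g) := by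
  refine realRooted_and_countInterlaces_of_sign_at_roots (leadingCoeff_add_pos hlf hlg)
    (hfh.nodup_roots hgh hnc) ?_ fun β hβ => ?_
  · have hf' : Multiset.card f.roots = f.natDegree := hf
    have hg' : Multiset.card g.roots = g.natDegree := hg
    rw [natDegree_add_of_leadingCoeff_pos hlf hlg]
    have := hfh.card_roots
    have := hgh.card_roots
    omega
  rw [eval_add, mul_add]
  have hf₀ := hfh.neg_one_pow_mul_eval_nonneg hf hlf hβ
  have hg₀ := hgh.neg_one_pow_mul_eval_nonneg hg hlg hβ
  rcases not_and_or.1 (hnc β hβ) with hfβ | hgβ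
  · linarith [hfh.neg_one_pow_mul_eval_pos hf hlf hβ hfβ]
  · linarith [hgh.neg_one_pow_mul_eval_pos hg hlg hβ hgβ]

theorem roots_X_sub_C_mul {q : ℝ[X]} (hq : q ≠ 0) (γ : ℝ) :
    ((X - C γ) * q).roots = γ ::ₘ q.roots := by
  rw [roots_mul (mul_ne_zero (X_sub_C_ne_zero γ) hq), roots_X_sub_C]
  rfl

theorem realRooted_X_sub_C_mul_iff {q : ℝ[X]} (hq : q ≠ 0) (γ : ℝ) :
    RealRooted ((X - C γ) * q) ↔ RealRooted q := by
  rw [RealRooted, RealRooted, roots_X_sub_C_mul hq, Multiset.card_cons,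
    natDegree_mul (X_sub_C_ne_zero γ) hq, natDegree_X_sub_C]
  omega

theorem numRootsGE_X_sub_C_mul {q : ℝ[X]} (hq : q ≠ 0) (γ x : ℝ) :
    numRootsGE ((X - C γ) * q) x = numRootsGE q x + if x ≤ γ then 1 else 0 := by
  rw [numRootsGE, roots_X_sub_C_mul hq, Multiset.countP_cons]
  rfl

theorem countInterlaces_X_sub_C_mul_iff {h f : ℝ[X]} (hh : h ≠ 0) (hf : f ≠ 0) (γ : ℝ) :
    CountInterlaces ((X - C γ) * h) ((X - C γ) * f) ↔ CountInterlaces h f := by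
  simp only [CountInterlaces, numRootsGE_X_sub_C_mul hh, numRootsGE_X_sub_C_mul hf]
  refine forall_congr' fun x => ?_
  split_ifs <;> omega

theorem CountInterlaces.add {f g h : ℝ[X]} (hf : RealRooted f) (hg : RealRooted g)
    (hlf : 0 < f.leadingCoeff) (hlg : 0 < g.leadingCoeff) (hfh : CountInterlaces h f)
    (hgh : CountInterlaces h g) : RealRooted (f + g) ∧ CountInterlaces h (f + g) := by
  induction hn : Multiset.card h.roots generalizing f g h with
  | zero =>
    refine hfh.add_of_not_isRoot hf hg hlf hlg hgh fun β hβ => absurd hβ ?_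
    simp [Multiset.card_eq_zero.1 hn]
  | succ n ih =>
    by_cases hcommon : ∃ γ ∈ h.roots, f.IsRoot γ ∧ g.IsRoot γ
    swap
    · exact hfh.add_of_not_isRoot hf hg hlf hlg hgh fun β hβ hfg => hcommon ⟨β, hβ, hfg⟩
    obtain ⟨γ, hγ, hfγ, hgγ⟩ := hcommon
    obtain ⟨f₁, rfl⟩ := dvd_iff_isRoot.2 hfγ
    obtain ⟨g₁, rfl⟩ := dvd_iff_isRoot.2 hgγ
    obtain ⟨h₁, rfl⟩ := dvd_iff_isRoot.2 (isRoot_of_mem_roots hγ)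
    have hh₁ : h₁ ≠ 0 := right_ne_zero_of_mul (ne_zero_of_mem_roots hγ)
    have hf₁ : f₁ ≠ 0 := by rintro rfl; simp at hlf
    have hg₁ : g₁ ≠ 0 := by rintro rfl; simp at hlg
    simp only [leadingCoeff_mul, leadingCoeff_X_sub_C, one_mul] at hlf hlg
    have hF₁ : f₁ + g₁ ≠ 0 := leadingCoeff_ne_zero.1 (leadingCoeff_add_pos hlf hlg).ne'
    rw [realRooted_X_sub_C_mul_iff hf₁] at hf
    rw [realRooted_X_sub_C_mul_iff hg₁] at hg
    rw [countInterlaces_X_sub_C_mul_iff hh₁ hf₁] at hfh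
    rw [countInterlaces_X_sub_C_mul_iff hh₁ hg₁] at hgh
    rw [roots_X_sub_C_mul hh₁, Multiset.card_cons, Nat.add_right_cancel_iff] at hn
    rw [← mul_add, realRooted_X_sub_C_mul_iff hF₁, countInterlaces_X_sub_C_mul_iff hh₁ hF₁]
    exact ih hf hg hlf hlg hfh hgh hn

theorem stmt1_general (f g h : Polynomial ℝ)
    (h1 : Interlaces h f) (h2 : Interlaces h g) :
    Interlaces h (f + g) := by
  rw [interlaces_iff] at h1 h2 ⊢
  obtain ⟨hf, hh, hlf, hlh, hfh⟩ := h1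
  obtain ⟨hg, -, hlg, -, hgh⟩ := h2
  obtain ⟨hF, hFh⟩ := hfh.add hf hg hlf hlg hgh
  exact ⟨hF, hh, leadingCoeff_add_pos hlf hlg, hlh, hFh⟩

/-- If `f`, `g`, `h` are real-rooted polynomials with nonnegative coefficients
such that `h ⪯ f` and `h ⪯ g`, then `h ⪯ f + g`. -/
theorem stmt1 (f g h : Polynomial ℝ)
    (hfc : ∀ i, 0 ≤ f.coeff i) (hgc : ∀ i, 0 ≤ g.coeff i) (hhc : ∀ i, 0 ≤ h.coeff i)
    (hfr : RealRooted f) (hgr : RealRooted g) (hhr : RealRooted h)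
    (h1 : Interlaces h f) (h2 : Interlaces h g) :
    Interlaces h (f + g) :=
  stmt1_general f g h h1 h2
end

section
/- Let P be a locally finite poset with least element 0̂ in which every finite interval is graded. Then P is triangular (every interval [x,y] with ρ(x)=i, ρ(y)=j has a number M(i,j) of maximal chains depending only on i,j) if and only if there exists a function N(i,j,k) such that every interval [x,y] with ρ(x)=i, ρ(y)=k contains exactly N(i,j,k) elements of rank j, for all i < j < k. -/
/-- The set of maximal chains of the interval `[x, y]`: saturated chains
`x = c₀ ⋖ c₁ ⋖ ⋯ ⋖ c_k = y`, encoded as lists. -/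
def maxChains {P : Type*} [PartialOrder P] (x y : P) : Set (List P) :=
  {l | l.Chain' (· ⋖ ·) ∧ l.head? = some x ∧ l.getLast? = some y}

/-! Every maximal chain of `[x, y]` meets each rank level between `ρ x` and `ρ y` exactly once,
so the number `c(x, y)` of maximal chains satisfies `c(x, y) = ∑_{ρ w = j} c(x, w) c(w, y)`.
If `c` depends only on the ranks, this reads `M(i, k) = #{w ∈ [x, y] | ρ w = j} · M(i, j) M(j, k)`
with `M(i, k) > 0`, which pins down the rank-level count. Conversely, for `j = ρ x + 1` it reads
`c(x, y) = ∑_{x ⋖ z ≤ y} c(z, y)`, so by induction `c(x, y)` is the product of the atom counts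
`N(t, t + 1, ρ y)` for `ρ x ≤ t < ρ y - 1`. -/

section MaxChains

variable {P : Type*} [PartialOrder P] {x y z a b : P} {l : List P}

lemma mem_maxChains :
    l ∈ maxChains x y ↔ l.IsChain (· ⋖ ·) ∧ l.head? = some x ∧ l.getLast? = some y :=
  Iff.rfl

lemma nil_notMem_maxChains : [] ∉ maxChains x y := by
  simp [mem_maxChains]

lemma singleton_mem_maxChains_iff : [a] ∈ maxChains x y ↔ a = x ∧ a = y := by
  simp [mem_maxChains]

lemma cons_cons_mem_maxChains_iff :
    a :: b :: l ∈ maxChains x y ↔ a = x ∧ x ⋖ b ∧ b :: l ∈ maxChains b y := by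
  simp only [mem_maxChains, List.isChain_cons_cons,
    List.head?_cons, List.getLast?_cons_cons, Option.some_inj, true_and]
  constructor
  · rintro ⟨⟨hab, hc⟩, rfl, hl⟩
    exact ⟨rfl, hab, hc, hl⟩
  · rintro ⟨rfl, hab, hc, hl⟩
    exact ⟨⟨hab, hc⟩, rfl, hl⟩

lemma cons_mem_maxChains (hxz : x ⋖ z) {m : List P} (hm : m ∈ maxChains z y) :
    x :: m ∈ maxChains x y := by
  match m, hm with
  | [], hm => exact absurd hm nil_notMem_maxChains
  | b :: l, hm =>
    obtain rfl : b = z := by simpa using hm.2.1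
    exact cons_cons_mem_maxChains_iff.2 ⟨rfl, hxz, hm⟩

lemma le_of_mem_maxChains (hl : l ∈ maxChains x y) : x ≤ y := by
  induction l generalizing x with
  | nil => exact absurd hl nil_notMem_maxChains
  | cons a l ih =>
    cases l with
    | nil => obtain ⟨rfl, rfl⟩ := singleton_mem_maxChains_iff.1 hl; rfl
    | cons b l =>
      obtain ⟨-, hxb, hb⟩ := cons_cons_mem_maxChains_iff.1 hl
      exact hxb.le.trans (ih hb)

lemma maxChains_self (x : P) : maxChains x x = {[x]} := by
  ext l
  match l with
  | [] => simp [nil_notMem_maxChains]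
  | [a] => simp [singleton_mem_maxChains_iff]
  | a :: b :: l =>
    simp only [Set.mem_singleton_iff, List.cons.injEq, reduceCtorEq, and_false, iff_false]
    rintro hl
    obtain ⟨-, hxb, hb⟩ := cons_cons_mem_maxChains_iff.1 hl
    exact hxb.lt.not_ge (le_of_mem_maxChains hb)

lemma card_maxChains_self (x : P) : Nat.card (maxChains x x) = 1 := by
  simp [maxChains_self]

def consMaxChains (x y : P) :
    (Σ z : {z : P // x ⋖ z ∧ z ≤ y}, maxChains (z : P) y) → maxChains x y :=
  fun p => ⟨x :: p.2, cons_mem_maxChains p.1.2.1 p.2.2⟩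

lemma consMaxChains_bijective (hxy : x < y) : (consMaxChains x y).Bijective := by
  constructor
  · rintro ⟨⟨z₁, _⟩, m₁, hm₁⟩ ⟨⟨z₂, _⟩, m₂, hm₂⟩ h
    obtain rfl : m₁ = m₂ := List.cons_injective (congrArg Subtype.val h)
    refine Sigma.subtype_ext (Subtype.ext ?_) rfl
    exact Option.some_inj.1 (hm₁.2.1.symm.trans hm₂.2.1)
  · rintro ⟨l, hl⟩
    match l, hl with
    | [], hl => exact absurd hl nil_notMem_maxChains
    | [a], hl =>
      obtain ⟨rfl, rfl⟩ := singleton_mem_maxChains_iff.1 hl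
      exact absurd hxy (lt_irrefl a)
    | a :: b :: l, hl =>
      obtain ⟨rfl, hab, hb⟩ := cons_cons_mem_maxChains_iff.1 hl
      exact ⟨⟨⟨b, hab, le_of_mem_maxChains hb⟩, b :: l, hb⟩, rfl⟩

end MaxChains

section LocallyFinite

variable {P : Type*} [PartialOrder P] [LocallyFiniteOrder P]

@[elab_as_elim]
theorem decreasingInduction_covBy {y : P} {p : ∀ x, x ≤ y → Prop}
    (step : ∀ x (hxy : x ≤ y), (∀ z, x ⋖ z → ∀ hzy : z ≤ y, p z hzy) → p x hxy)
    {x : P} (hxy : x ≤ y) : p x hxy :=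
  step x hxy fun z hxz hzy =>
    have : (Finset.Icc z y).card < (Finset.Icc x y).card :=
      Finset.card_lt_card (Finset.Icc_ssubset_Icc_left hxy hxz.lt le_rfl)
    decreasingInduction_covBy (x := z) step hzy
termination_by (Finset.Icc x y).card

variable {x y : P}

lemma maxChains_finite (x y : P) : (maxChains x y).Finite := by
  by_cases hxy : x ≤ y
  · induction hxy using decreasingInduction_covBy with | step x hxy ih =>
    obtain rfl | hxy := hxy.eq_or_lt
    · simp [maxChains_self]
    have : Finite {z : P // x ⋖ z ∧ z ≤ y} :=
      (Set.finite_Icc x y).subset fun z hz => ⟨hz.1.le, hz.2⟩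
    have (z : {z : P // x ⋖ z ∧ z ≤ y}) : Finite (maxChains (z : P) y) :=
      (ih z z.2.1 z.2.2).to_subtype
    have := Finite.of_surjective _ (consMaxChains_bijective hxy).2
    exact Set.toFinite _
  · exact Set.Finite.subset Set.finite_empty fun l hl => hxy (le_of_mem_maxChains hl)

lemma maxChains_nonempty (hxy : x ≤ y) : (maxChains x y).Nonempty := by
  induction hxy using decreasingInduction_covBy with | step x hxy ih =>
  obtain rfl | hxy := hxy.eq_or_lt
  · simp [maxChains_self]
  obtain ⟨z, hxz, hzy⟩ := exists_covBy_le_of_lt hxy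
  obtain ⟨m, hm⟩ := ih z hxz hzy
  exact ⟨x :: m, cons_mem_maxChains hxz hm⟩

lemma card_maxChains_pos (hxy : x ≤ y) : 0 < Nat.card (maxChains x y) :=
  have := (maxChains_finite x y).to_subtype
  have := (maxChains_nonempty hxy).to_subtype
  Nat.card_pos

lemma card_maxChains_eq_sum (hxy : x < y) (C : Finset P) (hC : ∀ z, z ∈ C ↔ x ⋖ z ∧ z ≤ y) :
    Nat.card (maxChains x y) = ∑ z ∈ C, Nat.card (maxChains z y) := by
  have : Fintype {z : P // x ⋖ z ∧ z ≤ y} := Fintype.subtype C hC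
  have (z : {z : P // x ⋖ z ∧ z ≤ y}) : Finite (maxChains (z : P) y) :=
    (maxChains_finite _ y).to_subtype
  rw [Finset.sum_subtype C hC, ← Nat.card_sigma]
  exact (Nat.card_eq_of_bijective _ (consMaxChains_bijective hxy)).symm

end LocallyFinite

section Rank

variable {P : Type*} [PartialOrder P] [LocallyFiniteOrder P] {ρ : P → ℕ} {x y : P}

def rankLevel (ρ : P → ℕ) (x y : P) (j : ℕ) : Finset P :=
  {z ∈ Finset.Icc x y | ρ z = j}

lemma mem_rankLevel {j : ℕ} {z : P} : z ∈ rankLevel ρ x y j ↔ x ≤ z ∧ z ≤ y ∧ ρ z = j := by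
  simp [rankLevel, and_assoc]

lemma card_rankLevel (j : ℕ) :
    (rankLevel ρ x y j).card = Nat.card {z : P | x ≤ z ∧ z ≤ y ∧ ρ z = j} := by
  rw [← Nat.card_eq_finsetCard]
  exact Nat.card_congr (Equiv.subtypeEquivRight fun _ => mem_rankLevel)

variable (hcov : ∀ a b : P, a ⋖ b → ρ b = ρ a + 1)
include hcov

lemma strictMono_of_covBy_eq_succ : StrictMono ρ :=
  (strictMono_iff_forall_covBy ρ).2 fun a b h => (hcov a b h).symm ▸ Nat.lt_succ_self _

lemma rankLevel_left (hxy : x ≤ y) : rankLevel ρ x y (ρ x) = {x} := by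
  ext z
  simp only [mem_rankLevel, Finset.mem_singleton]
  refine ⟨fun ⟨hxz, _, hz⟩ => ?_, by rintro rfl; exact ⟨le_rfl, hxy, rfl⟩⟩
  by_contra hne
  exact (strictMono_of_covBy_eq_succ hcov (lt_of_le_of_ne hxz (Ne.symm hne))).ne' hz

lemma rankLevel_right (hxy : x ≤ y) : rankLevel ρ x y (ρ y) = {y} := by
  ext z
  simp only [mem_rankLevel, Finset.mem_singleton]
  refine ⟨fun ⟨_, hzy, hz⟩ => ?_, by rintro rfl; exact ⟨hxy, le_rfl, rfl⟩⟩
  by_contra hne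
  exact (strictMono_of_covBy_eq_succ hcov (lt_of_le_of_ne hzy hne)).ne hz

lemma mem_rankLevel_succ {z : P} : z ∈ rankLevel ρ x y (ρ x + 1) ↔ x ⋖ z ∧ z ≤ y := by
  rw [mem_rankLevel]
  refine ⟨fun ⟨hxz, hzy, hz⟩ => ⟨⟨?_, fun w hxw hwz => ?_⟩, hzy⟩,
    fun ⟨hxz, hzy⟩ => ⟨hxz.le, hzy, hcov x z hxz⟩⟩
  · exact lt_of_le_of_ne hxz (by rintro rfl; omega)
  · have := strictMono_of_covBy_eq_succ hcov hxw
    have := strictMono_of_covBy_eq_succ hcov hwz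
    omega

lemma card_maxChains_eq_sum_rankLevel_succ (hxy : x < y) :
    Nat.card (maxChains x y) = ∑ z ∈ rankLevel ρ x y (ρ x + 1), Nat.card (maxChains z y) :=
  card_maxChains_eq_sum hxy _ fun _ => mem_rankLevel_succ hcov

/-- Each maximal chain of `[x, y]` passes through exactly one element of rank `j`. -/
theorem card_maxChains_eq_sum_mul (hxy : x ≤ y) {j : ℕ} (hxj : ρ x ≤ j) (hjy : j ≤ ρ y) :
    Nat.card (maxChains x y) =
      ∑ w ∈ rankLevel ρ x y j, Nat.card (maxChains x w) * Nat.card (maxChains w y) := by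
  induction hxy using decreasingInduction_covBy generalizing j with | step x hxy ih =>
  obtain rfl | hxj := hxj.eq_or_lt
  · rw [rankLevel_left hcov hxy, Finset.sum_singleton, card_maxChains_self, one_mul]
  have hxy : x < y := lt_of_le_of_ne hxy (by rintro rfl; omega)
  calc Nat.card (maxChains x y)
      = ∑ z ∈ rankLevel ρ x y (ρ x + 1), Nat.card (maxChains z y) :=
        card_maxChains_eq_sum_rankLevel_succ hcov hxy
    _ = ∑ z ∈ rankLevel ρ x y (ρ x + 1), ∑ w ∈ rankLevel ρ z y j,
          Nat.card (maxChains z w) * Nat.card (maxChains w y) := by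
        refine Finset.sum_congr rfl fun z hz => ?_
        obtain ⟨hxz, hzy⟩ := (mem_rankLevel_succ hcov).1 hz
        exact ih z hxz hzy (by rw [hcov x z hxz]; omega) hjy
    _ = ∑ w ∈ rankLevel ρ x y j, ∑ z ∈ rankLevel ρ x w (ρ x + 1),
          Nat.card (maxChains z w) * Nat.card (maxChains w y) := by
        refine Finset.sum_comm' fun z w => ?_
        simp only [mem_rankLevel]
        constructor
        · rintro ⟨⟨hxz, hzy, hz⟩, hzw, hwy, hw⟩
          exact ⟨⟨hxz, hzw, hz⟩, hxz.trans hzw, hwy, hw⟩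
        · rintro ⟨⟨hxz, hzw, hz⟩, hxw, hwy, hw⟩
          exact ⟨⟨hxz, hzw.trans hwy, hz⟩, hzw, hwy, hw⟩
    _ = ∑ w ∈ rankLevel ρ x y j, Nat.card (maxChains x w) * Nat.card (maxChains w y) := by
        refine Finset.sum_congr rfl fun w hw => ?_
        obtain ⟨hxw, -, rfl⟩ := mem_rankLevel.1 hw
        rw [← Finset.sum_mul, card_maxChains_eq_sum_rankLevel_succ hcov
          (lt_of_le_of_ne hxw (by rintro rfl; omega))]

theorem card_rankLevel_mul_eq {M : ℕ → ℕ → ℕ}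
    (hM : ∀ x y : P, x < y → Nat.card (maxChains x y) = M (ρ x) (ρ y))
    (hxy : x ≤ y) {j : ℕ} (hxj : ρ x < j) (hjy : j < ρ y) :
    (rankLevel ρ x y j).card * (M (ρ x) j * M j (ρ y)) = M (ρ x) (ρ y) := by
  rw [← hM x y (lt_of_le_of_ne hxy (by rintro rfl; omega)),
    card_maxChains_eq_sum_mul hcov hxy hxj.le hjy.le, ← smul_eq_mul, ← Finset.sum_const]
  refine Finset.sum_congr rfl fun w hw => ?_
  obtain ⟨hxw, hwy, rfl⟩ := mem_rankLevel.1 hw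
  rw [hM x w (lt_of_le_of_ne hxw (by rintro rfl; omega)),
    hM w y (lt_of_le_of_ne hwy (by rintro rfl; omega))]

theorem card_maxChains_eq_prod {A : ℕ → ℕ → ℕ}
    (hA : ∀ x y : P, x ≤ y → ρ x + 1 < ρ y → (rankLevel ρ x y (ρ x + 1)).card = A (ρ x) (ρ y))
    (hxy : x ≤ y) : Nat.card (maxChains x y) = ∏ t ∈ Finset.Ico (ρ x) (ρ y - 1), A t (ρ y) := by
  induction hxy using decreasingInduction_covBy with | step x hxy ih =>
  obtain rfl | hxy' := hxy.eq_or_lt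
  · rw [card_maxChains_self, Finset.Ico_eq_empty (by omega), Finset.prod_empty]
  rw [card_maxChains_eq_sum_rankLevel_succ hcov hxy']
  obtain hsucc | hlt := (show ρ x + 1 ≤ ρ y from strictMono_of_covBy_eq_succ hcov hxy').eq_or_lt
  · rw [hsucc, rankLevel_right hcov hxy, Finset.sum_singleton, card_maxChains_self,
      ← hsucc, Nat.add_sub_cancel, Finset.Ico_self, Finset.prod_empty]
  calc ∑ z ∈ rankLevel ρ x y (ρ x + 1), Nat.card (maxChains z y)
      = ∑ _z ∈ rankLevel ρ x y (ρ x + 1), ∏ t ∈ Finset.Ico (ρ x + 1) (ρ y - 1), A t (ρ y) := by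
        refine Finset.sum_congr rfl fun z hz => ?_
        obtain ⟨hxz, hzy⟩ := (mem_rankLevel_succ hcov).1 hz
        rw [ih z hxz hzy, hcov x z hxz]
    _ = A (ρ x) (ρ y) * ∏ t ∈ Finset.Ico (ρ x + 1) (ρ y - 1), A t (ρ y) := by
        rw [Finset.sum_const, smul_eq_mul, hA x y hxy hlt]
    _ = ∏ t ∈ Finset.Ico (ρ x) (ρ y - 1), A t (ρ y) :=
        (Finset.prod_eq_prod_Ico_succ_bot (show ρ x < ρ y - 1 by omega) (A · (ρ y))).symm

end Rank

theorem stmt2_general {P : Type*} [PartialOrder P] [LocallyFiniteOrder P]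
    (ρ : P → ℕ) (hcov : ∀ a b : P, a ⋖ b → ρ b = ρ a + 1) :
    (∃ M : ℕ → ℕ → ℕ, ∀ x y : P, x < y → Nat.card (maxChains x y) = M (ρ x) (ρ y)) ↔
    (∃ N : ℕ → ℕ → ℕ → ℕ, ∀ x y : P, x ≤ y → ∀ j : ℕ, ρ x < j → j < ρ y →
      Nat.card {z : P | x ≤ z ∧ z ≤ y ∧ ρ z = j} = N (ρ x) j (ρ y)) := by
  constructor
  · rintro ⟨M, hM⟩
    refine ⟨fun i j k => M i k / (M i j * M j k), fun x y hxy j hxj hjy => ?_⟩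
    have hsplit := card_rankLevel_mul_eq hcov hM hxy hxj hjy
    have hpos : 0 < M (ρ x) (ρ y) := by
      rw [← hM x y (lt_of_le_of_ne hxy (by rintro rfl; omega))]
      exact card_maxChains_pos hxy
    rw [← card_rankLevel]
    exact (Nat.div_eq_of_eq_mul_left (Nat.pos_of_mul_pos_left (hsplit ▸ hpos)) hsplit.symm).symm
  · rintro ⟨N, hN⟩
    refine ⟨fun i k => ∏ t ∈ Finset.Ico i (k - 1), N t (t + 1) k, fun x y hxy => ?_⟩
    refine card_maxChains_eq_prod hcov (fun x y hxy hlt => ?_) hxy.le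
    rw [card_rankLevel]
    exact hN x y hxy (ρ x + 1) (Nat.lt_succ_self _) hlt

/-- A locally finite poset `P` with least element, all of whose intervals are graded
(witnessed by a rank function `ρ` increasing by one along covers), is triangular
(the number of maximal chains of `[x,y]` depends only on `(ρ x, ρ y)`) if and only
if there is a function `N` such that every interval `[x,y]` with `ρ x = i`,
`ρ y = k` has exactly `N i j k` elements of rank `j`, for all `i < j < k`. -/
theorem stmt2 {P : Type*} [PartialOrder P] [OrderBot P] [LocallyFiniteOrder P]
    (ρ : P → ℕ) (hρ0 : ρ ⊥ = 0) (hcov : ∀ a b : P, a ⋖ b → ρ b = ρ a + 1) :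
    (∃ M : ℕ → ℕ → ℕ, ∀ x y : P, x < y → Nat.card (maxChains x y) = M (ρ x) (ρ y)) ↔
    (∃ N : ℕ → ℕ → ℕ → ℕ, ∀ x y : P, x ≤ y → ∀ j : ℕ, ρ x < j → j < ρ y →
      Nat.card {z : P | x ≤ z ∧ z ≤ y ∧ ρ z = j} = N (ρ x) j (ρ y)) :=
  stmt2_general ρ hcov
end

section
/- Let L be a finite geometric lattice with rank function ρ. For all x ≤ y in L there exists z ∈ L with z ∨ x = y and ρ(z) = ρ(y) − ρ(x). Consequently, writing R_L(x,y) = Σ_{z : z∨x=y} t^{ρ(z)}, the power t^{ρ(y)−ρ(x)+1} does not divide R_L(x,y). -/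
open scoped Classical in
/-- `R_L(u,v) = Σ_{z : z ⊔ u = v} t^{ρ z}`, as a polynomial in `t`. -/
noncomputable def RL {L : Type*} [Lattice L] [Fintype L] (ρ : L → ℕ) (u v : L) :
    Polynomial ℤ :=
  ∑ z ∈ Finset.univ.filter (fun z : L => z ⊔ u = v), Polynomial.X ^ ρ z

/-!
Adjoining to `x` an atom `a ≤ y` outside `x` raises the rank of `x` by at least one, while by
submodularity it raises the rank of the join of the atoms chosen so far by at most one. Repeating
until `y` is reached produces `z` with `z ⊔ x = y` and `ρ z ≤ ρ y - ρ x`; submodularity gives the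
reverse inequality. The coefficient of `t ^ (ρ y - ρ x)` in `R_L(x,y)` counts such `z`, so it is
nonzero.
-/

open Polynomial

section RankFunction

variable {L : Type*} [Lattice L] {ρ : L → ℕ}

theorem rank_sub_le_of_sup_eq (hsub : ∀ a b : L, ρ (a ⊔ b) + ρ (a ⊓ b) ≤ ρ a + ρ b)
    {x y z : L} (hzx : z ⊔ x = y) : ρ y - ρ x ≤ ρ z := by
  have := hsub z x
  rw [hzx] at this
  omega

variable [OrderBot L]

theorem exists_atom_le_not_le (hatom : ∀ x : L, ∃ s : Finset L, (∀ a ∈ s, IsAtom a) ∧ x = s.sup id)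
    {x y : L} (hyx : ¬ y ≤ x) : ∃ a, IsAtom a ∧ a ≤ y ∧ ¬ a ≤ x := by
  obtain ⟨s, hs, rfl⟩ := hatom y
  by_contra! h
  exact hyx (Finset.sup_le fun a ha => h a (hs a ha) (Finset.le_sup (f := id) ha))

theorem exists_sup_eq_rank_le [WellFoundedGT L] (hρ0 : ρ ⊥ = 0) (hρ : StrictMono ρ)
    (hρatom : ∀ a : L, IsAtom a → ρ a = 1)
    (hsub : ∀ a b : L, ρ (a ⊔ b) + ρ (a ⊓ b) ≤ ρ a + ρ b)
    (hatom : ∀ x : L, ∃ s : Finset L, (∀ a ∈ s, IsAtom a) ∧ x = s.sup id)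
    {x y : L} (hxy : x ≤ y) : ∃ z, z ⊔ x = y ∧ ρ z ≤ ρ y - ρ x := by
  induction x using WellFoundedGT.induction with
  | _ x ih =>
    rcases hxy.eq_or_lt with rfl | hlt
    · exact ⟨⊥, bot_sup_eq x, by simp [hρ0]⟩
    obtain ⟨a, ha, hay, hax⟩ := exists_atom_le_not_le hatom hlt.not_ge
    have hxa : x < x ⊔ a := left_lt_sup.2 hax
    obtain ⟨z, hz, hρz⟩ := ih (x ⊔ a) hxa (sup_le hxy hay)
    refine ⟨z ⊔ a, by rw [← hz, sup_right_comm, sup_assoc], ?_⟩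
    have hza : ρ (z ⊔ a) ≤ ρ z + 1 := by
      have := hsub z a
      rw [hρatom a ha] at this
      omega
    have hxay : ρ (x ⊔ a) ≤ ρ y := hρ.monotone (sup_le hxy hay)
    have := hρ hxa
    omega

end RankFunction

open scoped Classical in
theorem coeff_RL {L : Type*} [Lattice L] [Fintype L] (ρ : L → ℕ) (u v : L) (k : ℕ) :
    (RL ρ u v).coeff k = ((Finset.univ.filter fun z : L => z ⊔ u = v ∧ ρ z = k).card : ℤ) := by
  simp only [RL, finsetSum_coeff, coeff_X_pow, Finset.sum_boole, Finset.filter_filter, eq_comm]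

open scoped Classical in
/-- In a finite geometric lattice (graded, submodular rank, atomistic), for all `x ≤ y`
there is `z` with `z ⊔ x = y` and `ρ z = ρ y - ρ x`; consequently
`t^{ρ y - ρ x + 1}` does not divide `R_L(x,y)`. -/
theorem stmt5 {L : Type*} [Lattice L] [Fintype L] [OrderBot L]
    (ρ : L → ℕ) (hρ0 : ρ ⊥ = 0) (hcov : ∀ a b : L, a ⋖ b → ρ b = ρ a + 1)
    (hsub : ∀ a b : L, ρ (a ⊔ b) + ρ (a ⊓ b) ≤ ρ a + ρ b)
    (hatom : ∀ x : L, ∃ s : Finset L, (∀ a ∈ s, IsAtom a) ∧ x = s.sup id)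
    (x y : L) (hxy : x ≤ y) :
    (∃ z : L, z ⊔ x = y ∧ ρ z = ρ y - ρ x) ∧
    ¬ ((Polynomial.X : Polynomial ℤ) ^ (ρ y - ρ x + 1) ∣ RL ρ x y) := by
  have : LocallyFiniteOrder L := Fintype.toLocallyFiniteOrder
  have hρ : StrictMono ρ :=
    (strictMono_iff_forall_covBy ρ).2 fun a b h => (hcov a b h).symm ▸ Nat.lt_succ_self _
  have hρatom (a : L) (ha : IsAtom a) : ρ a = 1 := by
    simpa [hρ0] using hcov ⊥ a ha.bot_covBy
  obtain ⟨z, hzx, hρz_le⟩ := exists_sup_eq_rank_le hρ0 hρ hρatom hsub hatom hxy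
  have hρz : ρ z = ρ y - ρ x := hρz_le.antisymm (rank_sub_le_of_sup_eq hsub hzx)
  refine ⟨⟨z, hzx, hρz⟩, fun hdvd => ?_⟩
  have hcoeff := (X_pow_dvd_iff.1 hdvd) (ρ y - ρ x) (Nat.lt_succ_self _)
  rw [coeff_RL, Nat.cast_eq_zero, Finset.card_eq_zero] at hcoeff
  exact Finset.ne_empty_of_mem (a := z) (by simp [hzx, hρz]) hcoeff
end

section
/- Let L be a semimodular lattice and let x < x' ≤ y with x' covering x. Then R_L(x,y) = R_L(x',y) − Σ_w R_L(x,w), where the sum is over all w ∈ L such that y covers w, x ≤ w, and x' ≰ w. Here R_L(u,v) = Σ_{z : z ∨ u = v} t^{ρ(z)}. -/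
section Rank

variable {α : Type*} [PartialOrder α] [Finite α] {ρ : α → ℕ}

theorem strictMono_of_map_covBy_eq_add_one (hρ : ∀ a b : α, a ⋖ b → ρ b = ρ a + 1) :
    StrictMono ρ := by
  intro a b hab
  induction a using WellFoundedGT.induction with
  | _ a ih =>
    obtain ⟨c, hac, hcb⟩ := exists_covBy_le_of_lt hab
    have hc := hρ a c hac
    rcases hcb.eq_or_lt with rfl | hcb
    · omega
    · have := ih c hac.lt hcb
      omega

theorem covBy_of_lt_of_map_le_add_one (hρ : ∀ a b : α, a ⋖ b → ρ b = ρ a + 1) {a b : α}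
    (hab : a < b) (hle : ρ b ≤ ρ a + 1) : a ⋖ b := by
  refine ⟨hab, fun c hac hcb => ?_⟩
  have := strictMono_of_map_covBy_eq_add_one hρ hac
  have := strictMono_of_map_covBy_eq_add_one hρ hcb
  omega

end Rank

theorem isUpperModularLattice_of_rank {L : Type*} [Lattice L] [Finite L] (ρ : L → ℕ)
    (hcov : ∀ a b : L, a ⋖ b → ρ b = ρ a + 1)
    (hsub : ∀ a b : L, ρ (a ⊔ b) + ρ (a ⊓ b) ≤ ρ a + ρ b) :
    IsUpperModularLattice L where
  covBy_sup_of_inf_covBy {a b} h := by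
    have hlt : b < a ⊔ b := le_sup_right.lt_of_ne fun heq =>
      h.lt.ne (inf_eq_left.2 (heq ▸ le_sup_left))
    refine covBy_of_lt_of_map_le_add_one hcov hlt ?_
    have := hcov _ _ h
    have := hsub a b
    omega

section UpperModular

variable {L : Type*} [Lattice L] [IsUpperModularLattice L] {x x' y : L}

theorem CovBy.sup_left_wcovBy (hxx' : x ⋖ x') (z : L) : z ⊔ x ⩿ z ⊔ x' := by
  rcases hxx'.eq_or_eq (le_inf hxx'.le (le_sup_right : x ≤ z ⊔ x)) inf_le_left with hinf | hinf
  · have h : z ⊔ x ⋖ x' ⊔ (z ⊔ x) := covBy_sup_of_inf_covBy_left (by rwa [hinf])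
    rw [sup_left_comm, sup_of_le_left hxx'.le] at h
    exact h.wcovBy
  · exact (le_antisymm (sup_le_sup_left hxx'.le z)
      (sup_le le_sup_left (hinf ▸ inf_le_right))).wcovBy

theorem sup_eq_iff_of_covBy (hxx' : x ⋖ x') (hx'y : x' ≤ y) (z : L) :
    z ⊔ x' = y ↔ z ⊔ x = y ∨ (z ⊔ x ⋖ y ∧ x ≤ z ⊔ x ∧ ¬ x' ≤ z ⊔ x) := by
  have hsup : z ⊔ x ⊔ x' = z ⊔ x' := by rw [sup_assoc, sup_of_le_right hxx'.le]
  constructor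
  · rintro rfl
    refine (hxx'.sup_left_wcovBy z).eq_or_covBy.imp id fun hcov => ⟨hcov, le_sup_right, ?_⟩
    intro hx'
    exact hcov.ne (by rw [← hsup, sup_of_le_left hx'])
  · rintro (h | ⟨hw, -, hx'⟩)
    · exact le_antisymm (sup_le (h ▸ le_sup_left) hx'y) (h ▸ sup_le_sup_left hxx'.le z)
    · rw [← hsup]
      exact (hw.eq_or_eq le_sup_left (sup_le hw.le hx'y)).resolve_left
        fun h => hx' (h ▸ le_sup_right)

open scoped Classical in
theorem RL_eq_RL_add_sum [Fintype L] (ρ : L → ℕ) (hxx' : x ⋖ x') (hx'y : x' ≤ y) :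
    RL ρ x' y = RL ρ x y +
      ∑ w ∈ Finset.univ.filter (fun w : L => w ⋖ y ∧ x ≤ w ∧ ¬ x' ≤ w), RL ρ x w := by
  simp only [RL]
  rw [Finset.sum_fiberwise_eq_sum_filter _ _ (· ⊔ x)]
  simp_rw [Finset.mem_filter, Finset.mem_univ, true_and, sup_eq_iff_of_covBy hxx' hx'y]
  rw [Finset.filter_or, Finset.sum_union]
  exact Finset.disjoint_filter.2 fun z _ hy hw => hw.1.ne hy

end UpperModular

open scoped Classical in
theorem stmt6_general {L : Type*} [Lattice L] [Fintype L]
    (ρ : L → ℕ) (hcov : ∀ a b : L, a ⋖ b → ρ b = ρ a + 1)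
    (hsub : ∀ a b : L, ρ (a ⊔ b) + ρ (a ⊓ b) ≤ ρ a + ρ b)
    (x x' y : L) (hxx' : x ⋖ x') (hx'y : x' ≤ y) :
    RL ρ x y = RL ρ x' y -
      ∑ w ∈ Finset.univ.filter (fun w : L => w ⋖ y ∧ x ≤ w ∧ ¬ x' ≤ w), RL ρ x w := by
  have := isUpperModularLattice_of_rank ρ hcov hsub
  rw [RL_eq_RL_add_sum ρ hxx' hx'y, add_sub_cancel_right]

open scoped Classical in
/-- In a semimodular lattice, if `x'` covers `x` and `x' ≤ y`, then
`R_L(x,y) = R_L(x',y) - Σ_w R_L(x,w)`, the sum over all `w` such that `y` covers `w`,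
`x ≤ w` and `x' ≰ w`. -/
theorem stmt6 {L : Type*} [Lattice L] [Fintype L] [OrderBot L]
    (ρ : L → ℕ) (hρ0 : ρ ⊥ = 0) (hcov : ∀ a b : L, a ⋖ b → ρ b = ρ a + 1)
    (hsub : ∀ a b : L, ρ (a ⊔ b) + ρ (a ⊓ b) ≤ ρ a + ρ b)
    (x x' y : L) (hxx' : x ⋖ x') (hx'y : x' ≤ y) :
    RL ρ x y = RL ρ x' y -
      ∑ w ∈ Finset.univ.filter (fun w : L => w ⋖ y ∧ x ≤ w ∧ ¬ x' ≤ w), RL ρ x w :=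
  stmt6_general ρ hcov hsub x x' y hxx' hx'y
end

section
/- Let P be a finite poset of quasi-rank d+1 with least element 0̂ and largest element 1̂. Then the chain polynomial satisfies c_P(t) = c_{τ(P)}(t) + t · Σ_{h : ρ(h) = d} c_{⟨h⟩}(t), where τ(P) is P with all elements of quasi-rank d removed, and ⟨h⟩ = {z ∈ P : z ≤ h}. -/
/-!
Every chain either avoids the elements of quasi-rank `d` or contains exactly one of them, since
the quasi-rank is strictly monotone. The elements of quasi-rank `d` are coatoms, so a chain
through such an `h` is a chain of `⟨h⟩` containing `h`, possibly with `⊤` added. Erasing `⊤` if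
present and `h` otherwise is a bijection onto the chains of `⟨h⟩` that lowers the size by one,
which accounts for the factor `t`.
-/

open scoped Classical

/-- The chain polynomial of a finite poset: `c_P(t) = Σ_k c_k(P) t^k`, where `c_k(P)`
is the number of `k`-element chains of `P`. -/
noncomputable def chainPoly (P : Type*) [Fintype P] [PartialOrder P] : Polynomial ℝ :=
  ∑ s ∈ Finset.univ.filter (fun s : Finset P => IsChain (· ≤ ·) (↑s : Set P)),
    Polynomial.X ^ s.card

/-- The set of chain lengths from `⊥` to `x`: `n` belongs to it iff there is a chain
`⊥ = x₀ < x₁ < ⋯ < x_n = x`. -/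
def chainLengthsTo {P : Type*} [PartialOrder P] [OrderBot P] (x : P) : Set ℕ :=
  {n | ∃ l : List P, l.Chain' (· < ·) ∧ l.head? = some ⊥ ∧ l.getLast? = some x ∧
    l.length = n + 1}

open Finset Polynomial

lemma StrictMono.isAntichain_fiber {α β : Type*} [PartialOrder α] [Preorder β] {f : α → β}
    (hf : StrictMono f) (b : β) : IsAntichain (· ≤ ·) {x | f x = b} :=
  fun _ hx _ hy hne hxy => (hf (hxy.lt_of_ne hne)).ne (hx.trans hy.symm)

lemma IsChain.le_or_eq_top_of_isCoatom {P : Type*} [PartialOrder P] [OrderTop P] {s : Set P}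
    (hs : IsChain (· ≤ ·) s) {h : P} (hh : IsCoatom h) (hhs : h ∈ s) {x : P} (hx : x ∈ s) :
    x ≤ h ∨ x = ⊤ := by
  rcases hs.total hx hhs with hxh | hhx
  · exact Or.inl hxh
  rcases hhx.eq_or_lt with rfl | hlt
  · exact Or.inl le_rfl
  · exact Or.inr (hh.2 x hlt)

lemma strictMono_of_isGreatest_chainLengthsTo {P : Type*} [PartialOrder P] [OrderBot P]
    {ρ : P → ℕ} (hρ : ∀ x, IsGreatest (chainLengthsTo x) (ρ x)) : StrictMono ρ := by
  intro x y hxy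
  obtain ⟨l, hl, hhead, hlast, hlen⟩ := (hρ x).1
  have : ρ x + 1 ∈ chainLengthsTo y :=
    ⟨l ++ [y], hl.append (List.isChain_singleton y) (by simp [hlast, hxy]),
      by simp [List.head?_append, hhead], List.getLast?_concat, by simp [hlen]⟩
  exact Nat.lt_of_succ_le ((hρ y).2 this)

section ChainPoly

variable {P : Type*} [PartialOrder P] [Fintype P]

lemma chainPoly_subtype (p : P → Prop) [Fintype {x // p x}] :
    chainPoly {x // p x} =
      ∑ s ∈ univ.filter (fun s : Finset P => IsChain (· ≤ ·) (s : Set P) ∧ ∀ x ∈ s, p x),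
        X ^ #s := by
  have hchain (c : Finset {x // p x}) :
      IsChain (· ≤ ·) (c.map (Function.Embedding.subtype p) : Set P) ↔
        IsChain (· ≤ ·) (c : Set {x // p x}) := by
    rw [coe_map]
    exact IsChain.image_relEmbedding_iff (φ := OrderEmbedding.subtype p)
  refine Finset.sum_nbij (fun c => c.map (Function.Embedding.subtype p)) ?_
    (fun c _ c' _ h => Finset.map_injective _ h) ?_ (fun c _ => by rw [card_map])
  · intro c hc
    simp only [mem_filter, mem_univ, true_and] at hc ⊢
    exact ⟨(hchain c).2 hc, by simp +contextual⟩
  · intro s hs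
    simp only [coe_filter, mem_univ, true_and, Set.mem_ofPred_eq] at hs
    refine ⟨s.subtype p, ?_, subtype_map_of_mem hs.2⟩
    rw [mem_coe, mem_filter, ← hchain, subtype_map_of_mem hs.2]
    exact ⟨mem_univ _, hs.1⟩

lemma chainPoly_eq_add_sum_chains_mem (q : P → Prop) [DecidablePred q] [Fintype {x // ¬ q x}]
    (hq : IsAntichain (· ≤ ·) {x | q x}) :
    chainPoly P = chainPoly {x // ¬ q x} +
      ∑ h ∈ univ.filter q,
        ∑ s ∈ univ.filter (fun s : Finset P => IsChain (· ≤ ·) (s : Set P) ∧ h ∈ s), X ^ #s := by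
  have hdisj : ((univ.filter q : Finset P) : Set P).PairwiseDisjoint
      fun h => univ.filter fun s : Finset P => IsChain (· ≤ ·) (s : Set P) ∧ h ∈ s := by
    intro h₁ hh₁ h₂ hh₂ hne
    refine disjoint_left.2 fun s hs₁ hs₂ => ?_
    simp only [coe_filter, mem_filter, mem_univ, true_and] at hh₁ hh₂ hs₁ hs₂
    exact (hs₁.1.total hs₁.2 hs₂.2).elim (hq hh₁ hh₂ hne) (hq hh₂ hh₁ hne.symm)
  rw [chainPoly_subtype, ← sum_biUnion hdisj, chainPoly,
    ← sum_filter_add_sum_filter_not _ fun s => ∀ x ∈ s, ¬ q x, filter_filter, filter_filter]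
  congr 2
  · ext s
    simp
  · ext s
    simp only [mem_filter, mem_biUnion, mem_univ, true_and, not_forall, not_not, exists_prop]
    exact ⟨fun ⟨hs, x, hx, hqx⟩ => ⟨x, hqx, hs, hx⟩, fun ⟨x, hqx, hs, hx⟩ => ⟨hs, x, hx, hqx⟩⟩

lemma sum_chains_mem_of_isCoatom [OrderTop P] {h : P} (hh : IsCoatom h) :
    ∑ s ∈ univ.filter (fun s : Finset P => IsChain (· ≤ ·) (s : Set P) ∧ h ∈ s), X ^ #s =
      X * chainPoly {z // z ≤ h} := by
  have htop : ¬ (⊤ : P) ≤ h := fun hle => hh.1 (top_le_iff.1 hle)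
  rw [chainPoly_subtype, mul_sum]
  refine Finset.sum_nbij' (fun s => if ⊤ ∈ s then s.erase ⊤ else s.erase h)
    (fun c => if h ∈ c then insert ⊤ c else insert h c) ?_ ?_ ?_ ?_ ?_ <;>
    simp only [mem_filter, mem_univ, true_and]
  · rintro s ⟨hs, hhs⟩
    refine ⟨hs.mono (by split_ifs <;> simp), fun x hx => ?_⟩
    have hxs : x ∈ s := by split_ifs at hx <;> exact mem_of_mem_erase hx
    refine (hs.le_or_eq_top_of_isCoatom hh hhs hxs).resolve_right fun hxt => ?_
    subst hxt
    rw [if_pos hxs] at hx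
    exact notMem_erase _ _ hx
  · rintro c ⟨hc, hch⟩
    split_ifs with hhc
    · exact ⟨by simpa using hc.insert fun b _ _ => Or.inr le_top, mem_insert_of_mem hhc⟩
    · exact ⟨by simpa using hc.insert fun b hb _ => Or.inr (hch b hb), mem_insert_self _ _⟩
  · rintro s ⟨-, hhs⟩
    split_ifs with ht hh' hh'
    · exact insert_erase ht
    · exact absurd (mem_erase.2 ⟨hh.1, hhs⟩) hh'
    · exact absurd hh' (notMem_erase _ _)
    · exact insert_erase hhs
  · rintro c ⟨-, hch⟩
    have htc : ⊤ ∉ c := fun ht => htop (hch _ ht)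
    split_ifs with hhc ht ht
    · exact erase_insert htc
    · exact absurd (mem_insert_self ..) ht
    · exact absurd ((mem_insert.1 ht).resolve_right htc) (Ne.symm hh.1)
    · exact erase_insert hhc
  · rintro s ⟨-, hhs⟩
    have hpos : 0 < #s := card_pos.2 ⟨h, hhs⟩
    rw [← pow_succ']
    split_ifs with ht
    · rw [card_erase_of_mem ht, Nat.sub_add_cancel hpos]
    · rw [card_erase_of_mem hhs, Nat.sub_add_cancel hpos]

end ChainPoly

/-- For a finite poset `P` of quasi-rank `d+1` with `⊥` and `⊤`,
`c_P(t) = c_{τ(P)}(t) + t·Σ_{ρ h = d} c_{⟨h⟩}(t)`, where `τ(P)` removes all elements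
of quasi-rank `d` and `⟨h⟩ = {z : z ≤ h}`. -/
theorem stmt8 {P : Type*} [Fintype P] [PartialOrder P] [BoundedOrder P]
    (ρ : P → ℕ) (hρ : ∀ x : P, IsGreatest (chainLengthsTo x) (ρ x))
    (d : ℕ) (hd : ρ ⊤ = d + 1) :
    chainPoly P = chainPoly {x : P // ρ x ≠ d} +
      Polynomial.X *
        ∑ h ∈ Finset.univ.filter (fun h : P => ρ h = d), chainPoly {z : P // z ≤ h} := by
  have hmono := strictMono_of_isGreatest_chainLengthsTo hρ
  have hcoatom (h : P) (hh : ρ h = d) : IsCoatom h := by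
    refine ⟨fun htop => by subst htop; omega, fun z hz => by_contra fun hz' => ?_⟩
    have := hmono hz
    have := hmono (lt_top_iff_ne_top.2 hz')
    omega
  rw [chainPoly_eq_add_sum_chains_mem (fun x => ρ x = d) (hmono.isAntichain_fiber d), mul_sum]
  exact congrArg _ <| sum_congr rfl fun h hh =>
    sum_chains_mem_of_isCoatom (hcoatom h (mem_filter.1 hh).2)
end

section
/- Every geometric lattice of rank 3 has a real-rooted chain polynomial. Specifically, if L is a geometric lattice of rank 3 with m₁ atoms, m₂ coatoms, and e covering relations between atoms and coatoms, then c_L(t) = (1 + (m₁+m₂)t + e·t²)(1+t)², and since e ≤ m₁m₂ the discriminant (m₁−m₂)² + 4(m₁m₂ − e) is nonnegative, so c_L(t) is real-rooted. -/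
open scoped Classical

/-!
Since `⊥` and `⊤` are comparable to every element, each of them may be added to or removed from
any chain, which splits off the factor `(1 + t)²`. The remaining elements have rank 1 or 2, and a
strictly monotone rank admits at most one element of each rank in a chain, so the remaining chains
are `∅`, the `m₁ + m₂` singletons and the `e` pairs atom < coatom. The quadratic factor has
discriminant `(m₁ + m₂)² - 4e ≥ (m₁ - m₂)² ≥ 0` because `e ≤ m₁ m₂`.
-/

open Polynomial Finset

theorem splits_quadratic_of_discrim_nonneg {a b c : ℝ} (h : 0 ≤ discrim a b c) :
    Splits (C a * X ^ 2 + C b * X + C c) := by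
  rcases eq_or_ne a 0 with rfl | ha
  · refine Splits.of_natDegree_le_one ?_
    simpa using natDegree_linear_le (a := b) (b := c)
  · set s := √(discrim a b c)
    have hs : discrim a b c = s * s := (Real.mul_self_sqrt h).symm
    have hroot : (C a * X ^ 2 + C b * X + C c).eval ((-b + s) / (2 * a)) = 0 := by
      simpa [sq] using (quadratic_eq_zero_iff ha hs _).2 (Or.inl rfl)
    exact Splits.of_natDegree_eq_two (natDegree_quadratic ha) hroot

section Chains

variable {P : Type*} [PartialOrder P]

noncomputable def chainsOn (U : Finset P) : Finset (Finset P) :=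
  U.powerset.filter fun s => IsChain (· ≤ ·) (↑s : Set P)

noncomputable def chainPolyOn (U : Finset P) : ℝ[X] :=
  ∑ s ∈ chainsOn U, X ^ s.card

theorem mem_chainsOn {U s : Finset P} :
    s ∈ chainsOn U ↔ s ⊆ U ∧ IsChain (· ≤ ·) (↑s : Set P) := by
  rw [chainsOn, mem_filter, mem_powerset]

theorem chainPoly_eq_chainPolyOn_univ [Fintype P] :
    chainPoly P = chainPolyOn (univ : Finset P) := by
  rw [chainPoly, chainPolyOn, chainsOn, powerset_univ]

theorem chainPolyOn_insert {U : Finset P} {t : P} (ht : t ∉ U)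
    (hcomp : ∀ x ∈ U, x ≤ t ∨ t ≤ x) :
    chainPolyOn (insert t U) = (1 + X) * chainPolyOn U := by
  have hchain : ∀ s ∈ U.powerset,
      IsChain (· ≤ ·) (↑(insert t s) : Set P) ↔ IsChain (· ≤ ·) (s : Set P) := by
    intro s hs
    rw [coe_insert]
    exact ⟨IsChain.mono (Set.subset_insert _ _), fun h => h.insert fun x hx _ =>
      (hcomp x (mem_powerset.1 hs hx)).symm⟩
  have hcard : ∀ s ∈ U.powerset, (insert t s).card = s.card + 1 := fun s hs =>
    card_insert_of_notMem fun h => ht (mem_powerset.1 hs h)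
  simp only [chainPolyOn, chainsOn, sum_filter, sum_powerset_insert ht]
  rw [add_mul, one_mul, add_right_inj, mul_sum]
  refine sum_congr rfl fun s hs => ?_
  rw [if_congr (hchain s hs) rfl rfl, hcard s hs, pow_succ']
  split_ifs <;> simp

theorem chainPolyOn_eq_sum_range {U : Finset P} {n : ℕ}
    (hn : ∀ s ∈ chainsOn U, s.card ≤ n) :
    chainPolyOn U =
      ∑ k ∈ range (n + 1), C (#{s ∈ chainsOn U | s.card = k} : ℝ) * X ^ k := by
  rw [chainPolyOn, ← sum_fiberwise_of_maps_to (g := card) (t := range (n + 1))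
    fun s hs => mem_range_succ_iff.2 (hn s hs)]
  refine sum_congr rfl fun k _ => ?_
  rw [sum_congr rfl fun s hs => by rw [(mem_filter.1 hs).2], sum_const, nsmul_eq_mul,
    C_eq_natCast]

theorem filter_chainsOn_card_eq_zero (U : Finset P) :
    {s ∈ chainsOn U | s.card = 0} = {∅} := by
  ext s
  simp only [mem_filter, mem_chainsOn, card_eq_zero, mem_singleton]
  exact ⟨And.right, by rintro rfl; simp⟩

theorem card_filter_chainsOn_card_eq_one (U : Finset P) :
    #{s ∈ chainsOn U | s.card = 1} = #U := by
  have : {s ∈ chainsOn U | s.card = 1} = U.powersetCard 1 := by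
    ext s
    simp only [mem_filter, mem_chainsOn, mem_powersetCard]
    constructor
    · exact fun ⟨⟨hsU, _⟩, hs⟩ => ⟨hsU, hs⟩
    · rintro ⟨hsU, hs⟩
      obtain ⟨a, rfl⟩ := card_eq_one.1 hs
      exact ⟨⟨hsU, by simp⟩, hs⟩
  rw [this, card_powersetCard, Nat.choose_one_right]

theorem chainPoly_eq_one_add_X_sq_mul [Fintype P] [BoundedOrder P] [Nontrivial P] :
    chainPoly P = (1 + X) ^ 2 * chainPolyOn ({x | x ≠ ⊥ ∧ x ≠ ⊤} : Finset P) := by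
  set M : Finset P := {x | x ≠ ⊥ ∧ x ≠ ⊤}
  have huniv : (univ : Finset P) = insert ⊥ (insert ⊤ M) := by
    ext x
    by_cases hb : x = ⊥ <;> by_cases ht : x = ⊤ <;> simp [M, hb, ht]
  rw [chainPoly_eq_chainPolyOn_univ, huniv, chainPolyOn_insert, chainPolyOn_insert, ← mul_assoc,
    sq]
  · simp [M]
  · exact fun x _ => Or.inl le_top
  · simp [M, bot_ne_top]
  · exact fun x _ => Or.inr bot_le

end Chains

theorem strictMono_of_forall_covBy_eq_add_one {α : Type*} [Preorder α] [Fintype α]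
    {f : α → ℕ} (hf : ∀ a b : α, a ⋖ b → f b = f a + 1) : StrictMono f :=
  let := Fintype.toLocallyFiniteOrder (α := α)
  (strictMono_iff_forall_covBy f).2 fun a b h => (hf a b h).symm ▸ Nat.lt_succ_self _

theorem StrictMono.injOn_of_isChain {α β : Type*} [PartialOrder α] [Preorder β]
    {f : α → β} (hf : StrictMono f) {s : Set α} (hs : IsChain (· ≤ ·) s) : s.InjOn f := by
  intro x hx y hy hxy
  by_contra hne
  rcases hs hx hy hne with h | h
  · exact (hf (lt_of_le_of_ne h hne)).ne hxy
  · exact (hf (lt_of_le_of_ne h (Ne.symm hne))).ne' hxy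

section Levels

variable {P : Type*} [PartialOrder P] [Fintype P] {ρ : P → ℕ} {i j : ℕ}

theorem card_le_two_of_mem_chainsOn_levels (hρ : StrictMono ρ) {s : Finset P}
    (hs : s ∈ chainsOn ({x | ρ x = i ∨ ρ x = j} : Finset P)) : s.card ≤ 2 := by
  obtain ⟨hsU, hchain⟩ := mem_chainsOn.1 hs
  calc s.card ≤ #({i, j} : Finset ℕ) :=
        card_le_card_of_injOn ρ (fun x hx => by simpa using hsU hx) (hρ.injOn_of_isChain hchain)
    _ ≤ 2 := card_le_two

theorem card_filter_chainsOn_levels_card_eq_two (hρ : StrictMono ρ) (hij : i < j) :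
    #{s ∈ chainsOn ({x | ρ x = i ∨ ρ x = j} : Finset P) | s.card = 2} =
      #({p | ρ p.1 = i ∧ ρ p.2 = j ∧ p.1 < p.2} : Finset (P × P)) := by
  symm
  refine card_bij (fun p _ => {p.1, p.2}) ?_ ?_ ?_
  · rintro ⟨a, b⟩ hp
    obtain ⟨ha, hb, hab⟩ := (mem_filter.1 hp).2
    refine mem_filter.2 ⟨mem_chainsOn.2 ⟨?_, ?_⟩, card_pair hab.ne⟩
    · simp [insert_subset_iff, ha, hb]
    · rw [coe_pair]
      exact IsChain.pair hab.le
  · rintro ⟨a, b⟩ hp ⟨a', b'⟩ hp' h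
    simp only [mem_filter, mem_univ, true_and] at hp hp'
    have ha : a ∈ ({a', b'} : Finset P) := h ▸ mem_insert_self _ _
    have hb : b ∈ ({a', b'} : Finset P) := h ▸ mem_insert_of_mem (mem_singleton_self _)
    simp only [mem_insert, mem_singleton] at ha hb
    rcases ha with rfl | rfl <;> rcases hb with rfl | rfl <;> first | rfl | omega
  · intro s hs
    obtain ⟨⟨hsU, hchain⟩, hcard⟩ := And.imp_left mem_chainsOn.1 (mem_filter.1 hs)
    obtain ⟨x, y, hxy, rfl⟩ := card_eq_two.1 hcard
    obtain ⟨a, b, hab, hs⟩ : ∃ a b, a < b ∧ ({x, y} : Finset P) = {a, b} := by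
      rw [coe_pair] at hchain
      rcases hchain.total (Set.mem_insert x {y}) (Set.mem_insert_of_mem x rfl) with h | h
      · exact ⟨x, y, lt_of_le_of_ne h hxy, rfl⟩
      · exact ⟨y, x, lt_of_le_of_ne h hxy.symm, pair_comm x y⟩
    rw [hs] at hsU ⊢
    have ha : ρ a = i ∨ ρ a = j := by simpa using hsU (mem_insert_self a {b})
    have hb : ρ b = i ∨ ρ b = j := by simpa using hsU (mem_insert_of_mem (mem_singleton_self b))
    have hρab := hρ hab
    have hai : ρ a = i := by omega
    have hbj : ρ b = j := by omega
    exact ⟨(a, b), mem_filter.2 ⟨mem_univ _, hai, hbj, hab⟩, rfl⟩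

theorem chainPolyOn_levels (hρ : StrictMono ρ) (hij : i < j) :
    chainPolyOn ({x | ρ x = i ∨ ρ x = j} : Finset P) =
      1 + C ((#{x | ρ x = i} : ℝ) + #{x | ρ x = j}) * X +
        C (#({p | ρ p.1 = i ∧ ρ p.2 = j ∧ p.1 < p.2} : Finset (P × P)) : ℝ) * X ^ 2 := by
  have hdisj : Disjoint ({x | ρ x = i} : Finset P) ({x | ρ x = j} : Finset P) :=
    disjoint_filter.2 fun x _ hi hj => hij.ne (hi.symm.trans hj)
  rw [chainPolyOn_eq_sum_range fun s hs => card_le_two_of_mem_chainsOn_levels hρ hs]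
  simp only [sum_range_succ, range_zero, sum_empty, filter_chainsOn_card_eq_zero, card_singleton,
    card_filter_chainsOn_card_eq_one, card_filter_chainsOn_levels_card_eq_two hρ hij]
  rw [filter_or, card_union_of_disjoint hdisj]
  push_cast
  rw [C_1]
  ring

end Levels

theorem splits_one_add_C_mul_X_add_C_mul_X_sq {m₁ m₂ e : ℝ} (he : e ≤ m₁ * m₂) :
    Splits (1 + C (m₁ + m₂) * X + C e * X ^ 2) := by
  have hdiscrim : 0 ≤ discrim e (m₁ + m₂) 1 := by
    rw [discrim]
    nlinarith [sq_nonneg (m₁ - m₂)]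
  convert splits_quadratic_of_discrim_nonneg hdiscrim using 1
  rw [C_1]
  ring

theorem filter_ne_bot_ne_top_eq_of_rank_eq_three {P : Type*} [PartialOrder P] [BoundedOrder P]
    [Fintype P] {ρ : P → ℕ} (hρ : StrictMono ρ) (hbot : ρ ⊥ = 0) (htop : ρ ⊤ = 3) :
    ({x | x ≠ ⊥ ∧ x ≠ ⊤} : Finset P) = ({x | ρ x = 1 ∨ ρ x = 2} : Finset P) := by
  ext x
  have hne_bot : x ≠ ⊥ ↔ 0 < ρ x :=
    ⟨fun h => hbot ▸ hρ (bot_lt_iff_ne_bot.2 h), fun h hx => by simp [hx, hbot] at h⟩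
  have hne_top : x ≠ ⊤ ↔ ρ x < 3 :=
    ⟨fun h => htop ▸ hρ (lt_top_iff_ne_top.2 h), fun h hx => by simp [hx, htop] at h⟩
  simp only [mem_filter, mem_univ, true_and, hne_bot, hne_top]
  omega

theorem stmt16_general {L : Type*} [Lattice L] [Fintype L] [BoundedOrder L]
    (ρ : L → ℕ) (hρ0 : ρ ⊥ = 0) (hcov : ∀ a b : L, a ⋖ b → ρ b = ρ a + 1)
    (hrank : ρ ⊤ = 3)
    (m₁ m₂ e : ℕ)
    (hm₁ : m₁ = (Finset.univ.filter (fun x : L => ρ x = 1)).card)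
    (hm₂ : m₂ = (Finset.univ.filter (fun x : L => ρ x = 2)).card)
    (he : e = (Finset.univ.filter
      (fun p : L × L => ρ p.1 = 1 ∧ ρ p.2 = 2 ∧ p.1 < p.2)).card) :
    chainPoly L =
      (1 + Polynomial.C ((m₁ : ℝ) + m₂) * Polynomial.X +
        Polynomial.C (e : ℝ) * Polynomial.X ^ 2) * (1 + Polynomial.X) ^ 2 ∧
    Multiset.card (chainPoly L).roots = (chainPoly L).natDegree := by
  have hρ : StrictMono ρ := strictMono_of_forall_covBy_eq_add_one hcov
  have : Nontrivial L := ⟨⟨⊥, ⊤, fun h => by simp [h, hrank] at hρ0⟩⟩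
  have hpoly :
      chainPoly L = (1 + C ((m₁ : ℝ) + m₂) * X + C (e : ℝ) * X ^ 2) * (1 + X) ^ 2 := by
    rw [chainPoly_eq_one_add_X_sq_mul, filter_ne_bot_ne_top_eq_of_rank_eq_three hρ hρ0 hrank,
      chainPolyOn_levels hρ one_lt_two, hm₁, hm₂, he, mul_comm]
  have hincid : e ≤ m₁ * m₂ := by
    rw [he, hm₁, hm₂, ← card_product]
    exact card_le_card fun p hp => by simp_all
  refine ⟨hpoly, splits_iff_card_roots.1 ?_⟩
  rw [hpoly]
  exact (splits_one_add_C_mul_X_add_C_mul_X_sq (by exact_mod_cast hincid)).mul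
    (by simpa [add_comm] using (Splits.X_add_C (1 : ℝ)).pow 2)

/-- For a geometric lattice `L` of rank `3` (finite, atomistic, graded with submodular
rank function) with `m₁` atoms, `m₂` coatoms and `e` atom–coatom incidences,
`c_L(t) = (1 + (m₁+m₂)t + e t²)(1+t)²`, and `c_L(t)` is real-rooted. -/
theorem stmt16 {L : Type*} [Lattice L] [Fintype L] [BoundedOrder L]
    (ρ : L → ℕ) (hρ0 : ρ ⊥ = 0) (hcov : ∀ a b : L, a ⋖ b → ρ b = ρ a + 1)
    (hsub : ∀ a b : L, ρ (a ⊔ b) + ρ (a ⊓ b) ≤ ρ a + ρ b)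
    (hatom : ∀ x : L, ∃ s : Finset L, (∀ a ∈ s, IsAtom a) ∧ x = s.sup id)
    (hrank : ρ ⊤ = 3)
    (m₁ m₂ e : ℕ)
    (hm₁ : m₁ = (Finset.univ.filter (fun x : L => ρ x = 1)).card)
    (hm₂ : m₂ = (Finset.univ.filter (fun x : L => ρ x = 2)).card)
    (he : e = (Finset.univ.filter
      (fun p : L × L => ρ p.1 = 1 ∧ ρ p.2 = 2 ∧ p.1 < p.2)).card) :
    chainPoly L =
      (1 + Polynomial.C ((m₁ : ℝ) + m₂) * Polynomial.X +
        Polynomial.C (e : ℝ) * Polynomial.X ^ 2) * (1 + Polynomial.X) ^ 2 ∧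
    Multiset.card (chainPoly L).roots = (chainPoly L).natDegree :=
  stmt16_general ρ hρ0 hcov hrank m₁ m₂ e hm₁ hm₂ he
end

section
/- For each n ≥ 3, the limit as q → ∞ of q^{−n(n−1)/2} · A_n(t;q) equals t^{n−1} for every real t, where A_n(t;q) = Σ_{σ ∈ S_n} q^{inv(σ)} t^{des(σ)}. Consequently, since the Eulerian polynomial A_n(t) does not interlace t^{n−1} for n ≥ 3, the polynomial A_n(t;q) is not interlaced by A_n(t) for all sufficiently large q. -/
/-- The number of descents of a permutation of `Fin n`: indices `i` with
`i+1 < n` and `σ(i) > σ(i+1)`. -/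
def des {n : ℕ} (σ : Equiv.Perm (Fin n)) : ℕ :=
  (Finset.univ.filter
    (fun p : Fin n × Fin n => (p.1 : ℕ) + 1 = (p.2 : ℕ) ∧ σ p.2 < σ p.1)).card

/-- The number of inversions of a permutation of `Fin n`: pairs `i < j` with
`σ(i) > σ(j)`. -/
def inv {n : ℕ} (σ : Equiv.Perm (Fin n)) : ℕ :=
  (Finset.univ.filter (fun p : Fin n × Fin n => p.1 < p.2 ∧ σ p.2 < σ p.1)).card


/-!
Among all permutations only the reversal attains the maximal inversion number `N = n(n-1)/2`,
and it has `n - 1` descents. Hence `q^{-N} A_n(t;q) → t^{n-1}`, and for large `q` no other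
term of `A_n(t;q)` can cancel `q^N t^{n-1}` at a `t` bounded away from `0`: all zeros of
`A_n(t;q)` tend to `0`. The Eulerian polynomial has positive coefficients, so its zeros are
negative, hence bounded away from `0`. Interlacing would put the second largest zero of
`A_n(t;q)` below the largest zero of `A_n(t)`, which is impossible for large `q`.
-/

open Finset Polynomial Filter Topology Equiv
open scoped Nat

lemma mem_rootsDesc {f : ℝ[X]} {x : ℝ} : x ∈ rootsDesc f ↔ x ∈ f.roots := by
  rw [rootsDesc, List.mem_reverse, Multiset.mem_sort]

lemma RealRooted.length_rootsDesc {f : ℝ[X]} (hf : RealRooted f) :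
    (rootsDesc f).length = f.natDegree := by
  rw [rootsDesc, List.length_reverse, Multiset.length_sort, hf]

/-- The second largest zero of `f` is at most the largest zero of `g`. -/
lemma Interlaces.exists_root_le_root {f g : ℝ[X]} (h : Interlaces g f) (hf : 2 ≤ f.natDegree) :
    ∃ α ∈ f.roots, ∃ β ∈ g.roots, α ≤ β := by
  obtain ⟨hRf, hRg, -, -, hdeg, -, hle⟩ := h
  have h1 : 0 + 1 < (rootsDesc f).length := by rw [hRf.length_rootsDesc]; omega
  have h0 : 0 < (rootsDesc g).length := by rw [hRg.length_rootsDesc]; omega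
  exact ⟨_, mem_rootsDesc.1 (List.get_mem _ _), _, mem_rootsDesc.1 (List.get_mem _ _),
    hle 0 h1 h0⟩

lemma Multiset.exists_pos_le_one_forall_le_neg {s : Multiset ℝ} (hs : ∀ x ∈ s, x < 0) :
    ∃ δ, 0 < δ ∧ δ ≤ 1 ∧ ∀ x ∈ s, x ≤ -δ := by
  have hsmall : ∀ᶠ δ in 𝓝[>] (0 : ℝ), ∀ x ∈ s.toFinset, x ≤ -δ :=
    (eventually_all_finset _).2 fun x hx => nhdsWithin_le_nhds <|
      (eventually_le_nhds (neg_pos.2 (hs x (Multiset.mem_toFinset.1 hx)))).mono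
        fun δ hδ => by linarith
  have hle_one : ∀ᶠ δ in 𝓝[>] (0 : ℝ), δ ≤ 1 :=
    nhdsWithin_le_nhds (eventually_le_nhds one_pos)
  obtain ⟨δ, hδs, hδ1, hδ0⟩ := (hsmall.and (hle_one.and self_mem_nhdsWithin)).exists
  exact ⟨δ, hδ0, hδ1, fun x hx => hδs x (Multiset.mem_toFinset.2 hx)⟩

lemma pow_mul_pow_le_pow {a δ : ℝ} {d m : ℕ} (hδ : 0 ≤ δ) (hδ1 : δ ≤ 1) (hδa : δ ≤ a)
    (hdm : d ≤ m) : a ^ d * δ ^ m ≤ a ^ m := by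
  have had : 0 ≤ a ^ d := pow_nonneg (hδ.trans hδa) d
  calc a ^ d * δ ^ m ≤ a ^ d * δ ^ (m - d) :=
        mul_le_mul_of_nonneg_left (pow_le_pow_of_le_one hδ hδ1 (m.sub_le d)) had
    _ ≤ a ^ d * a ^ (m - d) := mul_le_mul_of_nonneg_left (pow_le_pow_left₀ hδ hδa _) had
    _ = a ^ m := by rw [← pow_add, Nat.add_sub_cancel' hdm]

namespace QEulerian

variable {n : ℕ}

lemma des_succ_eq_card {m : ℕ} (σ : Perm (Fin (m + 1))) :
    des σ = #{i : Fin m | σ i.succ < σ i.castSucc} := by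
  unfold des
  refine card_bij' (fun p hp => ⟨p.1, ?_⟩) (fun i _ => (i.castSucc, i.succ)) ?_ ?_ ?_ ?_
  · have := p.2.isLt
    simp only [mem_filter] at hp
    omega
  · rintro ⟨a, b⟩ hp
    simp only [mem_filter, mem_univ, true_and] at hp ⊢
    convert hp.2 <;> ext <;> simp [hp.1]
  · intro i hi
    simpa using hi
  · rintro ⟨a, b⟩ hp
    simp only [mem_filter, mem_univ, true_and] at hp
    ext <;> simp [hp.1]
  · intro i _
    rfl

lemma des_le (σ : Perm (Fin n)) : des σ ≤ n - 1 := by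
  cases n with
  | zero => simp [des]
  | succ m => exact (des_succ_eq_card σ).trans_le ((card_filter_le _ _).trans (by simp))

lemma des_one : des (1 : Perm (Fin n)) = 0 := by
  simp only [des, Perm.coe_one, id_eq, card_eq_zero, filter_eq_empty_iff, Fin.lt_def]
  omega

lemma des_revPerm : des (Fin.revPerm : Perm (Fin n)) = n - 1 := by
  cases n with
  | zero => simp [des]
  | succ m => simp [des_succ_eq_card]

lemma card_filter_fst_lt_snd :
    (univ.filter fun p : Fin n × Fin n => p.1 < p.2).card = n * (n - 1) / 2 := by
  simp [Fintype.card_product_filter_lt, Nat.choose_two_right]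

lemma filter_inversion_subset (σ : Perm (Fin n)) :
    univ.filter (fun p : Fin n × Fin n => p.1 < p.2 ∧ σ p.2 < σ p.1) ⊆
      univ.filter (fun p : Fin n × Fin n => p.1 < p.2) :=
  monotone_filter_right _ fun _ _ => And.left

lemma inv_le (σ : Perm (Fin n)) : inv σ ≤ n * (n - 1) / 2 :=
  card_filter_fst_lt_snd ▸ card_le_card (filter_inversion_subset σ)

lemma inv_revPerm : inv (Fin.revPerm : Perm (Fin n)) = n * (n - 1) / 2 := by
  simp [inv, ← card_filter_fst_lt_snd]

lemma eq_revPerm_of_inv_eq {σ : Perm (Fin n)} (h : inv σ = n * (n - 1) / 2) :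
    σ = Fin.revPerm := by
  rw [← card_filter_fst_lt_snd] at h
  have hall := eq_of_subset_of_card_le (filter_inversion_subset σ) h.ge
  have hanti : StrictAnti σ := fun a b hab => by
    simpa [hab] using (Finset.ext_iff.mp hall (a, b)).2
  have := (StrictAnti.comp hanti Fin.rev_strictAnti).eq_id
  exact Equiv.ext fun i => by simpa using congrFun this i.rev

lemma inv_lt_of_ne_revPerm {σ : Perm (Fin n)} (hσ : σ ≠ Fin.revPerm) :
    inv σ < n * (n - 1) / 2 :=
  (inv_le σ).lt_of_ne fun h => hσ (eq_revPerm_of_inv_eq h)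

lemma tendsto_pow_inv_div (σ : Perm (Fin n)) :
    Tendsto (fun q : ℝ => q ^ inv σ / q ^ (n * (n - 1) / 2)) atTop
      (𝓝 (if σ = Fin.revPerm then 1 else 0)) := by
  split_ifs with hσ
  · subst hσ
    rw [inv_revPerm]
    refine tendsto_const_nhds.congr' ?_
    filter_upwards [eventually_gt_atTop 0] with q hq
    exact (div_self (pow_pos hq _).ne').symm
  · exact tendsto_pow_div_pow_atTop_zero (inv_lt_of_ne_revPerm hσ)

lemma tendsto_sum_div_pow (t : ℝ) :
    Tendsto (fun q : ℝ => (∑ σ : Perm (Fin n), q ^ inv σ * t ^ des σ) / q ^ (n * (n - 1) / 2))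
      atTop (𝓝 (t ^ (n - 1))) := by
  have h := tendsto_finsetSum (univ : Finset (Perm (Fin n))) fun σ _ =>
    (tendsto_pow_inv_div σ).mul_const (t ^ des σ)
  simp only [ite_mul, one_mul, zero_mul, sum_ite_eq', mem_univ, if_true, des_revPerm] at h
  simpa only [sum_div, div_mul_eq_mul_div] using h

noncomputable def qEulerianPoly (n : ℕ) (q : ℝ) : ℝ[X] :=
  ∑ σ : Perm (Fin n), C (q ^ inv σ) * X ^ des σ

lemma sum_X_pow_des_eq_qEulerianPoly_one :
    ∑ σ : Perm (Fin n), (X : ℝ[X]) ^ des σ = qEulerianPoly n 1 := by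
  simp [qEulerianPoly]

lemma eval_qEulerianPoly (q x : ℝ) :
    (qEulerianPoly n q).eval x = ∑ σ : Perm (Fin n), q ^ inv σ * x ^ des σ := by
  simp [qEulerianPoly, eval_finsetSum]

lemma le_natDegree_qEulerianPoly {q : ℝ} (hq : 0 < q) :
    n - 1 ≤ (qEulerianPoly n q).natDegree := by
  refine le_natDegree_of_ne_zero (ne_of_gt ?_)
  rw [qEulerianPoly, finsetSum_coeff]
  refine sum_pos' (fun σ _ => by rw [coeff_C_mul, coeff_X_pow]; positivity)
    ⟨Fin.revPerm, mem_univ _, ?_⟩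
  rw [coeff_C_mul, coeff_X_pow, des_revPerm, if_pos rfl, mul_one]
  positivity

lemma neg_of_mem_roots_qEulerianPoly {q x : ℝ} (hq : 0 < q)
    (hx : x ∈ (qEulerianPoly n q).roots) : x < 0 := by
  by_contra! hx0
  refine (isRoot_of_mem_roots hx).not_gt ?_
  rw [eval_qEulerianPoly]
  exact sum_pos' (fun σ _ => by positivity) ⟨1, mem_univ _, by simp [des_one, hq]⟩

/-- The term `q^N x^{n-1}` of the reversal dominates: each of the other `< n!` terms carries at
least one factor `q` less and, as `δ ≤ |x|`, at most a factor `δ^{-(n-1)}` more. -/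
lemma eval_qEulerianPoly_ne_zero {δ q x : ℝ} (hδ : 0 < δ) (hδ1 : δ ≤ 1) (hx : δ ≤ |x|)
    (hq : (n ! : ℝ) < q * δ ^ (n - 1)) : (qEulerianPoly n q).eval x ≠ 0 := by
  intro hroot
  set N := n * (n - 1) / 2
  set R := univ.erase (Fin.revPerm : Perm (Fin n))
  have hδpow : 0 < δ ^ (n - 1) := by positivity
  have hq0 : 0 < q := pos_of_mul_pos_left ((Nat.cast_pos.2 n.factorial_pos).trans hq) hδpow.le
  have hq1 : 1 ≤ q := by
    have : q * δ ^ (n - 1) ≤ q := mul_le_of_le_one_right hq0.le (pow_le_one₀ hδ.le hδ1)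
    have : (1 : ℝ) ≤ n ! := by exact_mod_cast n.factorial_pos
    linarith
  set M := q ^ N * |x| ^ (n - 1)
  have hM : 0 < M := by have := hδ.trans_le hx; positivity
  have hdom : M ≤ ∑ σ ∈ R, q ^ inv σ * |x| ^ des σ := by
    rw [eval_qEulerianPoly, ← add_sum_erase _ _ (mem_univ Fin.revPerm), inv_revPerm,
      des_revPerm, add_eq_zero_iff_eq_neg] at hroot
    calc M = |q ^ N * x ^ (n - 1)| := by simp [M, abs_mul, abs_pow, abs_of_pos hq0]
      _ ≤ ∑ σ ∈ R, |q ^ inv σ * x ^ des σ| := by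
        rw [hroot, abs_neg]; exact abs_sum_le_sum_abs _ _
      _ = ∑ σ ∈ R, q ^ inv σ * |x| ^ des σ := by simp [abs_mul, abs_pow, abs_of_pos hq0]
  have hterm : ∀ σ ∈ R, q ^ inv σ * |x| ^ des σ * (q * δ ^ (n - 1)) ≤ M := fun σ hσ => by
    have hinv : q ^ inv σ * q ≤ q ^ N := by
      rw [← pow_succ]
      exact pow_le_pow_right₀ hq1 (inv_lt_of_ne_revPerm (ne_of_mem_erase hσ))
    have hdes : |x| ^ des σ * δ ^ (n - 1) ≤ |x| ^ (n - 1) :=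
      pow_mul_pow_le_pow hδ.le hδ1 hx (des_le σ)
    calc q ^ inv σ * |x| ^ des σ * (q * δ ^ (n - 1))
        = (q ^ inv σ * q) * (|x| ^ des σ * δ ^ (n - 1)) := by ring
      _ ≤ M := mul_le_mul hinv hdes (by positivity) (by positivity)
  have hcard : (#R : ℝ) ≤ n ! := by
    exact_mod_cast (card_erase_le.trans_eq (by simp [Fintype.card_perm]))
  have : M * (q * δ ^ (n - 1)) ≤ M * n ! := calc
    M * (q * δ ^ (n - 1)) ≤ ∑ σ ∈ R, q ^ inv σ * |x| ^ des σ * (q * δ ^ (n - 1)) := by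
      rw [← sum_mul]; exact mul_le_mul_of_nonneg_right hdom (by positivity)
    _ ≤ ∑ σ ∈ R, M := sum_le_sum hterm
    _ ≤ M * n ! := by rw [sum_const, nsmul_eq_mul, mul_comm]; gcongr
  exact hq.not_ge (le_of_mul_le_mul_left this hM)

end QEulerian

open QEulerian

/-- For `n ≥ 3`: `q^{-n(n-1)/2}·A_n(t;q) → t^{n-1}` as `q → ∞`, for every real `t`,
where `A_n(t;q) = Σ_σ q^{inv σ} t^{des σ}`; consequently the polynomial `A_n(t;q)` is
not interlaced by the Eulerian polynomial `A_n(t)` for all sufficiently large `q`. -/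
theorem stmt17 (n : ℕ) (hn : 3 ≤ n) :
    (∀ t : ℝ, Filter.Tendsto
      (fun q : ℝ =>
        (∑ σ : Equiv.Perm (Fin n), q ^ inv σ * t ^ des σ) / q ^ (n * (n - 1) / 2))
      Filter.atTop (nhds (t ^ (n - 1)))) ∧
    ∃ q₀ : ℝ, ∀ q : ℝ, q₀ ≤ q →
      ¬ Interlaces (∑ σ : Equiv.Perm (Fin n), (Polynomial.X : Polynomial ℝ) ^ des σ)
        (∑ σ : Equiv.Perm (Fin n), Polynomial.C (q ^ inv σ) * Polynomial.X ^ des σ) := by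
  refine ⟨tendsto_sum_div_pow, ?_⟩
  obtain ⟨δ, hδ0, hδ1, hroots⟩ := Multiset.exists_pos_le_one_forall_le_neg fun x hx =>
    neg_of_mem_roots_qEulerianPoly (n := n) one_pos hx
  have hδpow : 0 < δ ^ (n - 1) := by positivity
  refine ⟨(n ! + 1) / δ ^ (n - 1), fun q hq hI => ?_⟩
  have hqδ : (n ! : ℝ) < q * δ ^ (n - 1) := by rw [div_le_iff₀ hδpow] at hq; linarith
  have hq0 : 0 < q := pos_of_mul_pos_left ((Nat.cast_pos.2 n.factorial_pos).trans hqδ) hδpow.le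
  rw [sum_X_pow_des_eq_qEulerianPoly_one] at hI
  obtain ⟨α, hα, β, hβ, hαβ⟩ :=
    hI.exists_root_le_root ((by omega : 2 ≤ n - 1).trans (le_natDegree_qEulerianPoly hq0))
  refine eval_qEulerianPoly_ne_zero hδ0 hδ1 ?_ hqδ (isRoot_of_mem_roots hα)
  exact le_abs.2 (Or.inr (by linarith [hroots β hβ]))
end

section
/- Let L be a finite geometric lattice with rank function ρ, let 1 ≤ d < ρ(1̂), and let H ⊆ L be a generalized d-partition: an antichain not containing 1̂, with ρ(h) ≥ d for all h ∈ H, such that every x ∈ L with ρ(x) = d lies below a unique h ∈ H. Then the poset L(H, 1̂, d), obtained by taking all elements of L of rank at most d−1, together with H as the elements of rank d and 1̂ as the unique element of rank d+1 (with the induced order), is a geometric lattice. -/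
/-- The ground set of the `L`-paving lattice `L(H, 1̂, d)`: all elements of `L` of rank
at most `d-1`, together with the members of `H` (the new rank-`d` elements) and `⊤`
(the unique element of rank `d+1`), with the order induced from `L`. -/
abbrev PavSet {L : Type*} [Lattice L] [BoundedOrder L] (ρ : L → ℕ) (H : Set L)
    (d : ℕ) : Type _ :=
  {x : L // ρ x < d ∨ x ∈ H ∨ x = ⊤}

/-- Let `L` be a finite geometric lattice (graded with submodular rank function `ρ`,
atomistic) and let `H` be a generalized `d`-partition of `L` (`1 ≤ d < ρ ⊤`): an
antichain avoiding `⊤`, with `ρ h ≥ d` for all `h ∈ H`, such that every rank-`d`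
element lies below a unique member of `H`.  Then `L(H, 1̂, d)` is a geometric lattice:
it has binary joins and meets, it is atomistic (every element is the least upper
bound of the atoms — covers of the bottom — below it), and it admits a rank function
`ρ'` that is graded and submodular. -/
theorem stmt19 {L : Type*} [Lattice L] [Fintype L] [BoundedOrder L]
    (ρ : L → ℕ) (hρ0 : ρ ⊥ = 0) (hcov : ∀ a b : L, a ⋖ b → ρ b = ρ a + 1)
    (hsub : ∀ a b : L, ρ (a ⊔ b) + ρ (a ⊓ b) ≤ ρ a + ρ b)
    (hatomistic : ∀ x : L, ∃ s : Finset L, (∀ a ∈ s, IsAtom a) ∧ x = s.sup id)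
    (d : ℕ) (hd : 1 ≤ d) (hdtop : d < ρ ⊤)
    (H : Set L) (hHtop : (⊤ : L) ∉ H) (hHrk : ∀ h ∈ H, d ≤ ρ h)
    (hHanti : IsAntichain (· ≤ ·) H)
    (hHpart : ∀ x : L, ρ x = d → ∃! h, h ∈ H ∧ x ≤ h) :
    ∃ (sup inf : PavSet ρ H d → PavSet ρ H d → PavSet ρ H d) (ρ' : PavSet ρ H d → ℕ),
      (∀ a b : PavSet ρ H d, IsLUB {a, b} (sup a b)) ∧
      (∀ a b : PavSet ρ H d, IsGLB {a, b} (inf a b)) ∧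
      (∀ x : PavSet ρ H d,
        IsLUB {a : PavSet ρ H d |
          (⟨⊥, Or.inl (show ρ (⊥ : L) < d by rw [hρ0]; exact hd)⟩ : PavSet ρ H d) ⋖ a ∧
          a ≤ x} x) ∧
      ρ' ⟨⊥, Or.inl (show ρ (⊥ : L) < d by rw [hρ0]; exact hd)⟩ = 0 ∧
      (∀ a b : PavSet ρ H d, a ⋖ b → ρ' b = ρ' a + 1) ∧
      (∀ a b : PavSet ρ H d, ρ' (sup a b) + ρ' (inf a b) ≤ ρ' a + ρ' b) := by
  classical
  -- rank is strictly monotone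
  have hstrict : ∀ a b : L, a < b → ρ a < ρ b := by
    intro a
    refine (wellFounded_gt (α := L)).induction
      (C := fun a => ∀ b : L, a < b → ρ a < ρ b) a ?_
    intro x ih b hxb
    obtain ⟨c, hc, hcb⟩ := hxb.exists_covby_le
    have h1 := hcov x c hc
    rcases hcb.eq_or_lt with rfl | h2
    · omega
    · have := ih c hc.lt b h2
      omega
  have hmono : ∀ a b : L, a ≤ b → ρ a ≤ ρ b := by
    intro a b h
    rcases h.eq_or_lt with rfl | h
    · exact le_rfl
    · exact (hstrict _ _ h).le
  have hrk0 : ∀ x : L, ρ x = 0 → x = ⊥ := by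
    intro x hx
    by_contra h
    have := hstrict ⊥ x (bot_lt_iff_ne_bot.2 h)
    omega
  -- existence of elements of any rank below a given element
  have hex : ∀ (n : ℕ) (z : L), ρ z ≤ n → ∀ k, k ≤ ρ z → ∃ x, x ≤ z ∧ ρ x = k := by
    intro n
    induction n with
    | zero => intro z hz k hk; exact ⟨z, le_rfl, by omega⟩
    | succ n ih =>
      intro z hz k hk
      rcases eq_or_lt_of_le hk with heq | hlt
      · exact ⟨z, le_rfl, heq.symm⟩
      · have hzb : z ≠ ⊥ := by
          intro h; rw [h, hρ0] at hlt; omega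
        obtain ⟨w, -, hw⟩ := exists_le_covBy_of_lt (bot_lt_iff_ne_bot.2 hzb)
        have hwz := hcov w z hw
        obtain ⟨x, hx1, hx2⟩ := ih w (by omega) k (by omega)
        exact ⟨x, hx1.trans hw.le, hx2⟩
  have hexd : ∀ z : L, d ≤ ρ z → ∃ x, x ≤ z ∧ ρ x = d :=
    fun z h => hex (ρ z) z le_rfl d h
  have hHlt_top : ∀ h ∈ H, h < ⊤ :=
    fun h hh => lt_top_iff_ne_top.2 (fun e => hHtop (e ▸ hh))
  have huniq : ∀ z : L, d ≤ ρ z → ∀ h₁ ∈ H, ∀ h₂ ∈ H, z ≤ h₁ → z ≤ h₂ → h₁ = h₂ := by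
    intro z hz h₁ hh₁ h₂ hh₂ hzh₁ hzh₂
    obtain ⟨x, hxz, hxd⟩ := hexd z hz
    obtain ⟨h, -, hun⟩ := hHpart x hxd
    rw [hun h₁ ⟨hh₁, hxz.trans hzh₁⟩, hun h₂ ⟨hh₂, hxz.trans hzh₂⟩]
  -- closure of the ground set under meets
  have pmem : ∀ x y : L, (ρ x < d ∨ x ∈ H ∨ x = ⊤) → (ρ y < d ∨ y ∈ H ∨ y = ⊤) →
      (ρ (x ⊓ y) < d ∨ x ⊓ y ∈ H ∨ x ⊓ y = ⊤) := by
    rintro x y hx hy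
    rcases hx with hx | hx | rfl
    · exact Or.inl (lt_of_le_of_lt (hmono _ _ inf_le_left) hx)
    · rcases hy with hy | hy | rfl
      · exact Or.inl (lt_of_le_of_lt (hmono _ _ inf_le_right) hy)
      · by_cases hxy : x = y
        · subst hxy
          rw [inf_idem]
          exact Or.inr (Or.inl hx)
        · left
          by_contra hge
          push_neg at hge
          exact hxy (huniq (x ⊓ y) hge x hx y hy inf_le_left inf_le_right)
      · rw [inf_top_eq]
        exact Or.inr (Or.inl hx)
    · rw [top_inf_eq]
      exact hy
  haveI : Fintype (PavSet ρ H d) := Fintype.ofFinite _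
  set ptop : PavSet ρ H d := ⟨(⊤ : L), Or.inr (Or.inr rfl)⟩ with hptop
  set pbot : PavSet ρ H d := ⟨⊥, Or.inl (show ρ (⊥ : L) < d by rw [hρ0]; exact hd)⟩ with hpbot
  have hle : ∀ a b : PavSet ρ H d, a ≤ b ↔ a.1 ≤ b.1 := fun a b => Iff.rfl
  have hlt : ∀ a b : PavSet ρ H d, a < b ↔ a.1 < b.1 := fun a b => Subtype.coe_lt_coe.symm
  have hletop : ∀ a : PavSet ρ H d, a ≤ ptop := fun a => (hle _ _).2 le_top
  have hbotle : ∀ a : PavSet ρ H d, pbot ≤ a := fun a => (hle _ _).2 bot_le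
  -- the join: meet (in `L`) of all common upper bounds lying in the ground set
  set ubL : PavSet ρ H d → PavSet ρ H d → Finset L :=
    fun a b => Finset.univ.filter
      (fun c : L => (ρ c < d ∨ c ∈ H ∨ c = ⊤) ∧ a.1 ≤ c ∧ b.1 ≤ c) with hubL
  have hsupmem : ∀ a b : PavSet ρ H d,
      (ρ ((ubL a b).inf id) < d ∨ (ubL a b).inf id ∈ H ∨ (ubL a b).inf id = ⊤) := by
    intro a b
    refine Finset.inf_induction (p := fun z : L => ρ z < d ∨ z ∈ H ∨ z = ⊤)
      (Or.inr (Or.inr rfl)) (fun x hx y hy => pmem x y hx hy) ?_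
    intro c hc
    exact ((Finset.mem_filter.1 hc).2).1
  set psup : PavSet ρ H d → PavSet ρ H d → PavSet ρ H d :=
    fun a b => ⟨(ubL a b).inf id, hsupmem a b⟩ with hpsup
  set pinf : PavSet ρ H d → PavSet ρ H d → PavSet ρ H d :=
    fun a b => ⟨a.1 ⊓ b.1, pmem _ _ a.2 b.2⟩ with hpinf
  have hsupLUB : ∀ a b, IsLUB {a, b} (psup a b) := by
    intro a b
    constructor
    · rintro c (rfl | rfl)
      · refine (hle _ _).2 (Finset.le_inf ?_)
        intro x hx
        exact ((Finset.mem_filter.1 hx).2).2.1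
      · refine (hle _ _).2 (Finset.le_inf ?_)
        intro x hx
        exact ((Finset.mem_filter.1 hx).2).2.2
    · intro u hu
      refine (hle _ _).2 (Finset.inf_le (Finset.mem_filter.2 ⟨Finset.mem_univ _, u.2, ?_, ?_⟩))
      · exact hu (Set.mem_insert _ _)
      · exact hu (Set.mem_insert_of_mem _ rfl)
  have hsup_eq : ∀ a b c, IsLUB {a, b} c → psup a b = c :=
    fun a b c h => (hsupLUB a b).unique h
  have hinfGLB : ∀ a b : PavSet ρ H d, IsGLB {a, b} (pinf a b) := by
    intro a b
    constructor
    · rintro c (rfl | rfl)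
      · exact (hle _ _).2 inf_le_left
      · exact (hle _ _).2 inf_le_right
    · intro u hu
      exact (hle _ _).2 (le_inf (hu (Set.mem_insert _ _)) (hu (Set.mem_insert_of_mem _ rfl)))
  -- rank of atoms
  have hatomrk : ∀ a : L, IsAtom a → ρ a = 1 := by
    intro a ha
    have := hcov ⊥ a (bot_covBy_iff.2 ha)
    omega
  -- rank function
  set ρ' : PavSet ρ H d → ℕ :=
    fun x => if ρ x.1 < d then ρ x.1 else if x.1 = ⊤ then d + 1 else d with hρ'
  have hρ'1 : ∀ x : PavSet ρ H d, ρ x.1 < d → ρ' x = ρ x.1 := by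
    intro x hx; simp [hρ', hx]
  have hρ'2 : ∀ x : PavSet ρ H d, x.1 ∈ H → ρ' x = d := by
    intro x hx
    have h1 : ¬ ρ x.1 < d := not_lt.2 (hHrk _ hx)
    have h2 : x.1 ≠ ⊤ := fun e => hHtop (e ▸ hx)
    simp [hρ', h1, h2]
  have hρ'3 : ∀ x : PavSet ρ H d, x.1 = ⊤ → ρ' x = d + 1 := by
    intro x hx
    have h1 : ¬ ρ x.1 < d := by rw [hx]; omega
    rw [hρ']
    simp only [if_neg h1, if_pos hx]
  refine ⟨psup, pinf, ρ', hsupLUB, hinfGLB, ?_, ?_, ?_, ?_⟩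
  · -- atomisticity
    intro x
    constructor
    · rintro a ⟨-, hax⟩
      exact hax
    · intro u hu
      rcases Nat.lt_or_ge 1 d with h1d | h1d
      · -- d > 1 : the atoms of the paving lattice are the atoms of L
        obtain ⟨s, hs, hsx⟩ := hatomistic x.1
        refine (hle _ _).2 ?_
        rw [hsx]
        refine Finset.sup_le fun a ha => ?_
        have hatom := hs a ha
        have haP : ρ a < d := by rw [hatomrk a hatom]; exact h1d
        have hax : a ≤ x.1 := by rw [hsx]; exact Finset.le_sup (f := id) ha
        have hmem : (⟨a, Or.inl haP⟩ : PavSet ρ H d) ≤ u := by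
          refine hu ⟨⟨?_, ?_⟩, (hle _ _).2 hax⟩
          · exact (hlt _ _).2 (bot_lt_iff_ne_bot.2 hatom.1)
          · intro c hc1 hc2
            have hcb : c.1 = ⊥ := hatom.2 c.1 ((hlt _ _).1 hc2)
            exact not_lt_bot (hcb ▸ (hlt _ _).1 hc1)
        exact (hle _ _).1 hmem
      · -- d = 1 : the atoms of the paving lattice are the members of H
        have hd1 : d = 1 := by omega
        subst hd1
        have hHatom : ∀ (h : L) (hh : h ∈ H),
            pbot ⋖ (⟨h, Or.inr (Or.inl hh)⟩ : PavSet ρ H 1) := by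
          intro h hh
          constructor
          · refine (hlt _ _).2 (bot_lt_iff_ne_bot.2 fun e => ?_)
            have he : h = ⊥ := e
            have := hHrk _ hh
            rw [he, hρ0] at this
            omega
          · intro c hc1 hc2
            have hch : c.1 < h := (hlt _ _).1 hc2
            rcases c.2 with h' | h' | h'
            · have hcb : c.1 = ⊥ := hrk0 _ (by omega)
              exact not_lt_bot (hcb ▸ (hlt _ _).1 hc1)
            · exact hHanti h' hh (fun e => hch.ne e) hch.le
            · rw [h'] at hch
              exact not_top_lt hch
        rcases x.2 with hx | hx | hx
        · have hxb : x.1 = ⊥ := hrk0 _ (by omega)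
          exact le_trans ((hle _ _).2 (le_of_eq hxb)) (hbotle u)
        · exact hu ⟨hHatom x.1 hx, le_rfl⟩
        · have hHle : ∀ h ∈ H, h ≤ u.1 := by
            intro h hh
            exact (hle _ _).1 (hu ⟨hHatom h hh, (hle _ _).2 (by rw [hx]; exact le_top)⟩)
          refine (hle _ _).2 ?_
          rw [hx]
          obtain ⟨s, hs, hst⟩ := hatomistic (⊤ : L)
          refine le_trans (le_of_eq hst) (Finset.sup_le fun a ha => ?_)
          obtain ⟨h, ⟨hh, hah⟩, -⟩ := hHpart a (hatomrk a (hs a ha))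
          exact le_trans hah (hHle h hh)
  · -- rank of bottom
    have hb : ρ (pbot.1) < d := by
      show ρ (⊥ : L) < d
      rw [hρ0]; exact hd
    rw [hρ'1 pbot hb]
    exact hρ0
  · -- gradedness
    intro a b hab
    have hab' : a.1 < b.1 := (hlt _ _).1 hab.lt
    rcases b.2 with hb | hb | hb
    · have ha : ρ a.1 < d := (hstrict _ _ hab').trans hb
      have hLcov : a.1 ⋖ b.1 := by
        refine ⟨hab', fun c hac hcb => ?_⟩
        have hc : ρ c < d := (hstrict _ _ hcb).trans hb
        exact hab.2 ((hlt a ⟨c, Or.inl hc⟩).2 hac) ((hlt ⟨c, Or.inl hc⟩ b).2 hcb)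
      rw [hρ'1 b hb, hρ'1 a ha, hcov _ _ hLcov]
    · have ha : ρ a.1 < d := by
        rcases a.2 with h | h | h
        · exact h
        · exact absurd hab'.le (hHanti h hb (fun e => hab'.ne e))
        · exact absurd hab' (by rw [h]; exact not_top_lt)
      have had : ρ a.1 = d - 1 := by
        by_contra hne
        have hlt2 : ρ a.1 < d - 1 := by omega
        obtain ⟨c, hc, hcb⟩ := exists_covBy_le_of_lt hab'
        have hrc : ρ c = ρ a.1 + 1 := hcov _ _ hc
        have hcd : ρ c < d := by omega
        have hcne : c ≠ b.1 := by
          intro e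
          rw [e] at hrc
          have := hHrk _ hb
          omega
        exact hab.2 ((hlt a ⟨c, Or.inl hcd⟩).2 hc.lt)
          ((hlt ⟨c, Or.inl hcd⟩ b).2 (hcb.lt_of_ne hcne))
      rw [hρ'2 b hb, hρ'1 a ha]
      omega
    · rcases a.2 with ha | ha | ha
      · exfalso
        obtain ⟨c, hc, -⟩ := exists_covBy_le_of_lt hab'
        have hrc : ρ c = ρ a.1 + 1 := hcov _ _ hc
        by_cases hcase : ρ c < d
        · have hcb : c < b.1 := by
            rw [hb]
            refine lt_top_iff_ne_top.2 (fun e => ?_)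
            rw [e] at hcase
            omega
          exact hab.2 ((hlt a ⟨c, Or.inl hcase⟩).2 hc.lt) ((hlt ⟨c, Or.inl hcase⟩ b).2 hcb)
        · have hcd : ρ c = d := by omega
          obtain ⟨h, ⟨hh, hch⟩, -⟩ := hHpart c hcd
          have h1 : a.1 < h := lt_of_lt_of_le hc.lt hch
          have h2 : h < b.1 := by rw [hb]; exact hHlt_top h hh
          exact hab.2 ((hlt a ⟨h, Or.inr (Or.inl hh)⟩).2 h1)
            ((hlt ⟨h, Or.inr (Or.inl hh)⟩ b).2 h2)
      · rw [hρ'3 b hb, hρ'2 a ha]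
      · exfalso
        rw [ha, hb] at hab'
        exact lt_irrefl _ hab'
  · -- submodularity
    have hinfρ : ∀ a b : PavSet ρ H d, ρ (a.1 ⊓ b.1) < d →
        ρ' (pinf a b) = ρ (a.1 ⊓ b.1) := fun a b h => hρ'1 _ h
    have main : ∀ a b : PavSet ρ H d,
        (a.1 = ⊤ ∨ (a.1 ∈ H ∧ b.1 ∈ H) ∨ (a.1 ∈ H ∧ ρ b.1 < d) ∨ (ρ a.1 < d ∧ ρ b.1 < d)) →
        ρ' (psup a b) + ρ' (pinf a b) ≤ ρ' a + ρ' b := by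
      intro a b hcase
      rcases hcase with hA | ⟨hA, hB⟩ | ⟨hA, hB⟩ | ⟨hA, hB⟩
      · -- a.1 = ⊤
        have hsup : psup a b = a := by
          refine hsup_eq a b a ⟨?_, fun u hu => hu (Set.mem_insert _ _)⟩
          rintro c (rfl | rfl)
          · exact le_rfl
          · exact (hle _ _).2 (by rw [hA]; exact le_top)
        have hinf : pinf a b = b := Subtype.ext (by show a.1 ⊓ b.1 = b.1; rw [hA, top_inf_eq])
        rw [hsup, hinf]
      · -- both in H
        by_cases hab : a = b
        · subst hab
          have hsup : psup a a = a := by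
            refine hsup_eq a a a ⟨?_, fun u hu => hu (Set.mem_insert _ _)⟩
            rintro c (rfl | rfl) <;> exact le_rfl
          have hinf : pinf a a = a := Subtype.ext (inf_idem _)
          rw [hsup, hinf]
        · have hne : a.1 ≠ b.1 := fun e => hab (Subtype.ext e)
          have hm : ρ (a.1 ⊓ b.1) < d := by
            by_contra hge
            push_neg at hge
            exact hne (huniq _ hge _ hA _ hB inf_le_left inf_le_right)
          have hsup : psup a b = ptop := by
            refine hsup_eq a b ptop ⟨fun c _ => hletop c, ?_⟩
            intro u hu
            have hau : a.1 ≤ u.1 := (hle _ _).1 (hu (Set.mem_insert _ _))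
            have hbu : b.1 ≤ u.1 := (hle _ _).1 (hu (Set.mem_insert_of_mem _ rfl))
            rcases u.2 with h | h | h
            · have := hmono _ _ hau
              have := hHrk _ hA
              omega
            · have e1 : a.1 = u.1 := by
                by_contra e
                exact hHanti hA h e hau
              have e2 : b.1 = u.1 := by
                by_contra e
                exact hHanti hB h e hbu
              exact absurd (e1.trans e2.symm) hne
            · exact (hle _ _).2 (by rw [h])
          rw [hsup, hρ'3 ptop rfl, hρ'2 a hA, hρ'2 b hB, hinfρ a b hm]
          omega
      · -- a ∈ H, ρ b < d
        have hm : ρ (a.1 ⊓ b.1) < d := lt_of_le_of_lt (hmono _ _ inf_le_right) hB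
        by_cases hba : b.1 ≤ a.1
        · have hsup : psup a b = a := by
            refine hsup_eq a b a ⟨?_, fun u hu => hu (Set.mem_insert _ _)⟩
            rintro c (rfl | rfl)
            · exact le_rfl
            · exact (hle _ _).2 hba
          have hinf : pinf a b = b := Subtype.ext (inf_eq_right.2 hba)
          rw [hsup, hinf]
        · have hsup : psup a b = ptop := by
            refine hsup_eq a b ptop ⟨fun c _ => hletop c, ?_⟩
            intro u hu
            have hau : a.1 ≤ u.1 := (hle _ _).1 (hu (Set.mem_insert _ _))
            have hbu : b.1 ≤ u.1 := (hle _ _).1 (hu (Set.mem_insert_of_mem _ rfl))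
            rcases u.2 with h | h | h
            · have := hmono _ _ hau
              have := hHrk _ hA
              omega
            · have e1 : a.1 = u.1 := by
                by_contra e
                exact hHanti hA h e hau
              exact absurd (e1 ▸ hbu) hba
            · exact (hle _ _).2 (by rw [h])
          have hlt2 : ρ (a.1 ⊓ b.1) < ρ b.1 :=
            hstrict _ _ (lt_of_le_of_ne inf_le_right (fun e => hba (inf_eq_right.1 e)))
          rw [hsup, hρ'3 ptop rfl, hρ'2 a hA, hρ'1 b hB, hinfρ a b hm]
          omega
      · -- both of rank < d
        have hm : ρ (a.1 ⊓ b.1) < d := lt_of_le_of_lt (hmono _ _ inf_le_right) hB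
        have hsubz := hsub a.1 b.1
        by_cases hzd : ρ (a.1 ⊔ b.1) < d
        · have hsup : psup a b = ⟨a.1 ⊔ b.1, Or.inl hzd⟩ := by
            refine hsup_eq a b _ ⟨?_, ?_⟩
            · rintro c (rfl | rfl)
              · exact (hle _ _).2 le_sup_left
              · exact (hle _ _).2 le_sup_right
            · intro u hu
              exact (hle _ _).2 (sup_le ((hle _ _).1 (hu (Set.mem_insert _ _)))
                ((hle _ _).1 (hu (Set.mem_insert_of_mem _ rfl))))
          rw [hsup, hinfρ a b hm, hρ'1 a hA, hρ'1 b hB, hρ'1 _ hzd]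
          exact hsubz
        · push_neg at hzd
          by_cases hh : ∃ h ∈ H, a.1 ⊔ b.1 ≤ h
          · obtain ⟨h, hhH, hzh⟩ := hh
            have hsup : psup a b = ⟨h, Or.inr (Or.inl hhH)⟩ := by
              refine hsup_eq a b _ ⟨?_, ?_⟩
              · rintro c (rfl | rfl)
                · exact (hle _ _).2 (le_trans le_sup_left hzh)
                · exact (hle _ _).2 (le_trans le_sup_right hzh)
              · intro u hu
                have hzu : a.1 ⊔ b.1 ≤ u.1 :=
                  sup_le ((hle _ _).1 (hu (Set.mem_insert _ _)))
                    ((hle _ _).1 (hu (Set.mem_insert_of_mem _ rfl)))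
                rcases u.2 with h' | h' | h'
                · have := hmono _ _ hzu
                  omega
                · exact (hle _ _).2 (le_of_eq (huniq _ hzd h hhH u.1 h' hzh hzu))
                · exact (hle _ _).2 (by rw [h']; exact le_top)
            rw [hsup, hinfρ a b hm, hρ'1 a hA, hρ'1 b hB, hρ'2 _ hhH]
            omega
          · push_neg at hh
            have hzd1 : d + 1 ≤ ρ (a.1 ⊔ b.1) := by
              rcases eq_or_lt_of_le hzd with he | hlt2
              · obtain ⟨h, ⟨hhH, hzh⟩, -⟩ := hHpart _ he.symm
                exact absurd hzh (hh h hhH)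
              · omega
            have hsup : psup a b = ptop := by
              refine hsup_eq a b ptop ⟨fun c _ => hletop c, ?_⟩
              intro u hu
              have hzu : a.1 ⊔ b.1 ≤ u.1 :=
                sup_le ((hle _ _).1 (hu (Set.mem_insert _ _)))
                  ((hle _ _).1 (hu (Set.mem_insert_of_mem _ rfl)))
              rcases u.2 with h' | h' | h'
              · have := hmono _ _ hzu
                omega
              · exact absurd hzu (hh u.1 h')
              · exact (hle _ _).2 (by rw [h'])
            rw [hsup, hρ'3 ptop rfl, hinfρ a b hm, hρ'1 a hA, hρ'1 b hB]
            omega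
    intro a b
    have hswap : psup b a = psup a b :=
      hsup_eq b a _ (by rw [Set.pair_comm]; exact hsupLUB a b)
    have hswap2 : pinf b a = pinf a b := Subtype.ext (inf_comm _ _)
    have hcomm : ρ' (psup b a) + ρ' (pinf b a) ≤ ρ' b + ρ' a →
        ρ' (psup a b) + ρ' (pinf a b) ≤ ρ' a + ρ' b := by
      rw [hswap, hswap2]
      omega
    rcases a.2 with hA | hA | hA
    · rcases b.2 with hB | hB | hB
      · exact main a b (Or.inr (Or.inr (Or.inr ⟨hA, hB⟩)))
      · exact hcomm (main b a (Or.inr (Or.inr (Or.inl ⟨hB, hA⟩))))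
      · exact hcomm (main b a (Or.inl hB))
    · rcases b.2 with hB | hB | hB
      · exact main a b (Or.inr (Or.inr (Or.inl ⟨hA, hB⟩)))
      · exact main a b (Or.inr (Or.inl ⟨hA, hB⟩))
      · exact hcomm (main b a (Or.inl hB))
    · exact main a b (Or.inl hA)
end
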